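/- arXiv:1509.01924 — 5 statements merged into one kernel-verified Lean document; each statement's English description precedes it below -/
import Mathlib

section
/- Let G^1, G^2 ⊂ ℝ³ be the (unique) nonempty compact sets satisfying G^1 = (⋃_{n=1}^{K^{11}} w_n^{11}(G^1)) ∪ (⋃_{n=1}^{K^{12}} w_n^{12}(G^2)) and G^2 = (⋃_{n=1}^{K^{21}} w_n^{21}(G^1)) ∪ (⋃_{n=1}^{K^{22}} w_n^{22}(G^2)). Then there exist continuous vector-valued functions f^1 : [x_0^1, x_N^1] → ℝ² and f^2 : [x_0^2, x_M^2] → ℝ² such that G^1 = {(x, f^1(x)) : x ∈ [x_0^1, x_N^1]}, G^2 = {(x, f^2(x)) : x ∈ [x_0^2, x_M^2]}, f^1(x_n^1) = (y_n^1, z_n^1) for all 0 ≤ n ≤ N, and f^2(x_m^2) = (y_m^2, z_m^2) for all 0 ≤ m ≤ M. -/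
/-!
The first coordinates of the maps are affine; the join-up conditions make them carry
`[x₀ˢ, x_Nˢ]` onto the subintervals `[x_{n-1}ʳ, x_nʳ]`, and (★) puts their slopes in `(0, 1)`.
The rest is one contraction principle (`eq_zero_of_forall_le_mul`): a bounded nonnegative
quantity that is everywhere at most `k < 1` times its value at some preimage vanishes. Applied to
distances between `Prod.fst '' Gʳ` and `[x₀ʳ, x_Nʳ]` it shows that the two sets coincide. On
vertical lines the maps contract the `ℓ¹` distance of the `(y, z)`-parts by
`max |α| (|β| + |γ|) < 1`; applied to that distance it shows first that the fibres of `Gʳ` over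
the end knots are the end knots, and then that every fibre is a single point, since two different
maps can only meet over the knot they share. So `Gʳ` is the graph of a function on
`[x₀ʳ, x_Nʳ]`, continuous because `Gʳ` is compact, and interpolating because the knots lie in
`Gʳ`.
-/

open Set Metric Bornology

/-- The hypothesis `|β| + |γ| < 1` makes the maps contract the `ℓ¹` distance of the
`(y, z)`-parts, not their distance in the sup norm of `ℝ × ℝ`. -/
def vdist (p q : ℝ × ℝ × ℝ) : ℝ := |p.2.1 - q.2.1| + |p.2.2 - q.2.2|

theorem vdist_nonneg (p q : ℝ × ℝ × ℝ) : 0 ≤ vdist p q := by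
  unfold vdist; positivity

theorem vdist_self (p : ℝ × ℝ × ℝ) : vdist p p = 0 := by
  simp [vdist]

theorem eq_of_fst_eq_of_vdist_eq_zero {p q : ℝ × ℝ × ℝ} (h₁ : p.1 = q.1) (h : vdist p q = 0) :
    p = q := by
  obtain ⟨hy, hz⟩ := (add_eq_zero_iff_of_nonneg (abs_nonneg _) (abs_nonneg _)).1 h
  exact Prod.ext h₁ (Prod.ext (sub_eq_zero.1 (abs_eq_zero.1 hy)) (sub_eq_zero.1 (abs_eq_zero.1 hz)))

theorem vdist_le_two_mul_dist (p q : ℝ × ℝ × ℝ) : vdist p q ≤ 2 * dist p q := by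
  have hy : |p.2.1 - q.2.1| ≤ dist p q := by
    simp only [Prod.dist_eq, Real.dist_eq]
    exact le_max_of_le_right (le_max_left _ _)
  have hz : |p.2.2 - q.2.2| ≤ dist p q := by
    simp only [Prod.dist_eq, Real.dist_eq]
    exact le_max_of_le_right (le_max_right _ _)
  unfold vdist; linarith

theorem Bornology.IsBounded.exists_vdist_le {A : Set (ℝ × ℝ × ℝ)} (hA : IsBounded A) :
    ∃ C, ∀ p ∈ A, ∀ q ∈ A, vdist p q ≤ C := by
  obtain ⟨C, hC⟩ := isBounded_iff.1 hA
  exact ⟨2 * C, fun p hp q hq => (vdist_le_two_mul_dist p q).trans (by linarith [hC hp hq])⟩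

theorem vdist_le_of_apply_eq {w : ℝ × ℝ × ℝ → ℝ × ℝ × ℝ} {a b c d e f α β γ : ℝ}
    (hw : ∀ p, w p = (a * p.1 + b, c * p.1 + α * p.2.1 + β * p.2.2 + d, e * p.1 + γ * p.2.2 + f))
    {p q : ℝ × ℝ × ℝ} (hpq : p.1 = q.1) :
    vdist (w p) (w q) ≤ max |α| (|β| + |γ|) * vdist p q := by
  set k := max |α| (|β| + |γ|)
  have hy : (w p).2.1 - (w q).2.1 = α * (p.2.1 - q.2.1) + β * (p.2.2 - q.2.2) := by
    simp only [hw, hpq]; ring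
  have hz : (w p).2.2 - (w q).2.2 = γ * (p.2.2 - q.2.2) := by
    simp only [hw, hpq]; ring
  have hα : |α| ≤ k := le_max_left _ _
  have hβγ : |β| + |γ| ≤ k := le_max_right _ _
  unfold vdist
  rw [hy, hz, abs_mul]
  nlinarith [abs_add_le (α * (p.2.1 - q.2.1)) (β * (p.2.2 - q.2.2)), abs_mul α (p.2.1 - q.2.1),
    abs_mul β (p.2.2 - q.2.2), abs_nonneg (p.2.1 - q.2.1), abs_nonneg (p.2.2 - q.2.2)]

theorem eq_zero_of_forall_le_mul {ι α : Type*} [Finite ι] {S : ι → Set α} {D : ι → α → ℝ}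
    {k : ℝ} (hk : k < 1) (hD : ∀ r, ∀ x ∈ S r, 0 ≤ D r x) (hbdd : ∀ r, BddAbove (D r '' S r))
    (hstep : ∀ r, ∀ x ∈ S r, D r x = 0 ∨ ∃ s, ∃ y ∈ S s, D r x ≤ k * D s y) :
    ∀ r, ∀ x ∈ S r, D r x = 0 := by
  intro r x hx
  set T := ⋃ r, D r '' S r
  have hT : BddAbove T := by
    choose C hC using hbdd
    obtain ⟨M, hM⟩ := (finite_range C).bddAbove
    refine ⟨M, fun z hz => ?_⟩
    obtain ⟨s, y, hy, rfl⟩ := mem_iUnion.1 hz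
    exact (hC s ⟨y, hy, rfl⟩).trans (hM ⟨s, rfl⟩)
  have hle : ∀ s, ∀ y ∈ S s, D s y ≤ sSup T := fun s y hy =>
    le_csSup hT (mem_iUnion.2 ⟨s, mem_image_of_mem _ hy⟩)
  have hsup : sSup T ≤ max k 0 * sSup T := by
    refine csSup_le ⟨D r x, mem_iUnion.2 ⟨r, mem_image_of_mem _ hx⟩⟩ fun z hz => ?_
    obtain ⟨s, y, hy, rfl⟩ := mem_iUnion.1 hz
    rcases hstep s y hy with h | ⟨s', y', hy', h⟩
    · rw [h]
      exact mul_nonneg (le_max_right _ _) ((hD r x hx).trans (hle r x hx))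
    · calc D s y ≤ k * D s' y' := h
        _ ≤ max k 0 * D s' y' := mul_le_mul_of_nonneg_right (le_max_left _ _) (hD _ _ hy')
        _ ≤ max k 0 * sSup T := mul_le_mul_of_nonneg_left (hle _ _ hy') (le_max_right _ _)
  have hk' : max k 0 < 1 := max_lt hk one_pos
  nlinarith [hD r x hx, hle r x hx]

theorem infDist_le_mul_of_mapsTo {X Y : Type*} [PseudoMetricSpace X] [PseudoMetricSpace Y]
    {φ : X → Y} {k : ℝ} (hφ : ∀ x y, dist (φ x) (φ y) ≤ k * dist x y) {B : Set X} {B' : Set Y}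
    (hB : IsCompact B) (hne : B.Nonempty) (hmaps : MapsTo φ B B') (x : X) :
    infDist (φ x) B' ≤ k * infDist x B := by
  obtain ⟨b, hb, hdist⟩ := hB.exists_infDist_eq_dist hne x
  rw [hdist]
  exact (infDist_le_dist_of_mem (hmaps hb)).trans (hφ x b)

theorem bddAbove_infDist_image {X : Type*} [PseudoMetricSpace X] {A B : Set X}
    (hA : IsBounded A) (hB : IsBounded B) (hne : B.Nonempty) :
    BddAbove ((infDist · B) '' A) := by
  obtain ⟨b, hb⟩ := hne
  obtain ⟨C, hC⟩ := isBounded_iff.1 (hA.union hB)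
  exact ⟨C, forall_mem_image.2 fun a ha =>
    (infDist_le_dist_of_mem hb).trans (hC (Or.inl ha) (Or.inr hb))⟩

theorem exists_lt_forall_le_of_lt {ι : Type*} [Finite ι] (N : ι → ℕ) {f : ι → ℕ → ℝ} {c : ℝ}
    (h : ∀ r, ∀ n ∈ Icc 1 (N r), f r n < c) :
    ∃ k < c, ∀ r, ∀ n ∈ Icc 1 (N r), f r n ≤ k := by
  set s : Set (ι × ℕ) := {i | i.2 ∈ Icc 1 (N i.1)}
  have hs : s.Finite :=
    (finite_iUnion fun r => (finite_singleton r).prod (finite_Icc 1 (N r))).subset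
      fun i hi => mem_iUnion.2 ⟨i.1, rfl, hi⟩
  rcases s.eq_empty_or_nonempty with he | hne
  · exact ⟨c - 1, by linarith, fun r n hn => absurd (show (r, n) ∈ s from hn) (by simp [he])⟩
  · obtain ⟨⟨r₀, n₀⟩, h₀, hmax⟩ := exists_max_image s (fun i => f i.1 i.2) hs hne
    exact ⟨f r₀ n₀, h r₀ n₀ h₀, fun r n hn => hmax (r, n) hn⟩

theorem exists_mem_Icc_pred_of_mem_Icc {α : Type*} [LinearOrder α] {x : ℕ → α} {N : ℕ}
    (hN : 1 ≤ N) {t : α} (ht : t ∈ Icc (x 0) (x N)) : ∃ n ∈ Icc 1 N, t ∈ Icc (x (n - 1)) (x n) := by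
  classical
  have hex : ∃ n, 1 ≤ n ∧ t ≤ x n := ⟨N, hN, ht.2⟩
  obtain ⟨h1, h2⟩ := Nat.find_spec hex
  refine ⟨Nat.find hex, ⟨h1, Nat.find_min' hex ⟨hN, ht.2⟩⟩, ?_, h2⟩
  rcases h1.eq_or_lt with h | h
  · rw [← h]; exact ht.1
  · exact (not_le.1 fun h' => Nat.find_min hex (by omega) ⟨by omega, h'⟩).le

theorem IsCompact.exists_continuousOn_graph_eq {α β : Type*} [TopologicalSpace α] [T2Space α]
    [TopologicalSpace β] {K : Set (α × β)} (hK : IsCompact K) (hne : K.Nonempty)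
    (hinj : InjOn Prod.fst K) :
    ∃ f : α → β, ContinuousOn f (Prod.fst '' K) ∧ K = (fun x => (x, f x)) '' (Prod.fst '' K) := by
  have := hne.to_type
  set g := Function.invFunOn Prod.fst K
  have hg : ∀ x ∈ Prod.fst '' K, g x ∈ K ∧ (g x).1 = x := fun x hx =>
    ⟨Function.invFunOn_mem hx, Function.invFunOn_eq hx⟩
  have hgK : ∀ p ∈ K, g p.1 = p := fun p hp =>
    hinj (hg _ ⟨p, hp, rfl⟩).1 hp (hg _ ⟨p, hp, rfl⟩).2
  refine ⟨fun x => (g x).2, ?_, ?_⟩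
  · have := isCompact_iff_compactSpace.1 hK
    have hemb : Topology.IsClosedEmbedding fun p : K => (p : α × β).1 :=
      (continuous_fst.comp continuous_subtype_val).isClosedEmbedding
        fun p q h => Subtype.ext (hinj p.2 q.2 h)
    let φ : Prod.fst '' K → K := fun x => ⟨g x, (hg x x.2).1⟩
    have hφ : Continuous φ := hemb.isInducing.continuous_iff.2 <| by
      convert continuous_subtype_val using 1
      exact funext fun x => (hg x x.2).2
    rw [continuousOn_iff_continuous_domRestrict]
    exact continuous_snd.comp (continuous_subtype_val.comp hφ)
  · ext p
    constructor
    · intro hp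
      refine ⟨p.1, ⟨p, hp, rfl⟩, ?_⟩
      change (p.1, (g p.1).2) = p
      rw [hgK p hp]
    · rintro ⟨x, hx, rfl⟩
      convert (hg x hx).1 using 1
      exact Prod.ext (hg x hx).2.symm rfl

/-- The maps `w_m^{rs}` numbered by a single index per target: `map r n`, `1 ≤ n ≤ N r`, maps the
set `src r n` into the set `r`, over the `n`-th subinterval `[x_{n-1}ʳ, x_nʳ]`. -/
structure InterpolationSystem (ι : Type*) where
  N : ι → ℕ
  knot : ι → ℕ → ℝ × ℝ × ℝ
  src : ι → ℕ → ι
  map : ι → ℕ → ℝ × ℝ × ℝ → ℝ × ℝ × ℝ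
  slope : ι → ℕ → ℝ
  vcoef : ι → ℕ → ℝ
  strictMonoOn_knot_fst : ∀ r, StrictMonoOn (fun i => (knot r i).1) (Iic (N r))
  map_fst_sub : ∀ r, ∀ n ∈ Icc 1 (N r), ∀ p q : ℝ × ℝ × ℝ,
    (map r n p).1 - (map r n q).1 = slope r n * (p.1 - q.1)
  vdist_map_le : ∀ r, ∀ n ∈ Icc 1 (N r), ∀ p q : ℝ × ℝ × ℝ, p.1 = q.1 →
    vdist (map r n p) (map r n q) ≤ vcoef r n * vdist p q
  vcoef_lt_one : ∀ r, ∀ n ∈ Icc 1 (N r), vcoef r n < 1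
  map_knot : ∀ r, ∀ n ∈ Icc 1 (N r), map r n (knot (src r n) 0) = knot r (n - 1) ∧
    map r n (knot (src r n) (N (src r n))) = knot r n
  knot_sub_lt : ∀ r, ∀ n ∈ Icc 1 (N r), (knot r n).1 - (knot r (n - 1)).1 <
    (knot (src r n) (N (src r n))).1 - (knot (src r n) 0).1

namespace InterpolationSystem

variable {ι : Type*} (S : InterpolationSystem ι) {r : ι} {n : ℕ}

abbrev x (r : ι) (i : ℕ) : ℝ := (S.knot r i).1

def interval (r : ι) : Set ℝ := Icc (S.x r 0) (S.x r (S.N r))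

def fstMap (r : ι) (n : ℕ) (u : ℝ) : ℝ := S.x r (n - 1) + S.slope r n * (u - S.x (S.src r n) 0)

def IsAttractor (G : ι → Set (ℝ × ℝ × ℝ)) : Prop :=
  ∀ r, G r = ⋃ n ∈ Icc 1 (S.N r), S.map r n '' G (S.src r n)

theorem x_le_x {i j : ℕ} (hij : i ≤ j) (hj : j ≤ S.N r) : S.x r i ≤ S.x r j :=
  (S.strictMonoOn_knot_fst r).monotoneOn (mem_Iic.2 (hij.trans hj)) hj hij

theorem x_lt_x {i j : ℕ} (hij : i < j) (hj : j ≤ S.N r) : S.x r i < S.x r j :=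
  S.strictMonoOn_knot_fst r (mem_Iic.2 (hij.le.trans hj)) hj hij

theorem eq_of_x_eq {i j : ℕ} (hi : i ≤ S.N r) (hj : j ≤ S.N r) (h : S.x r i = S.x r j) : i = j :=
  (S.strictMonoOn_knot_fst r).injOn hi hj h

theorem x_mem_interval {i : ℕ} (hi : i ≤ S.N r) : S.x r i ∈ S.interval r :=
  ⟨S.x_le_x (Nat.zero_le i) hi, S.x_le_x hi le_rfl⟩

theorem slope_mul (hn : n ∈ Icc 1 (S.N r)) :
    S.slope r n * (S.x (S.src r n) (S.N (S.src r n)) - S.x (S.src r n) 0) =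
      S.x r n - S.x r (n - 1) := by
  have h := S.map_fst_sub r n hn (S.knot (S.src r n) (S.N (S.src r n))) (S.knot (S.src r n) 0)
  rw [(S.map_knot r n hn).1, (S.map_knot r n hn).2] at h
  exact h.symm

theorem slope_mem_Ioo (hn : n ∈ Icc 1 (S.N r)) : S.slope r n ∈ Ioo 0 1 := by
  have hgap : S.x r (n - 1) < S.x r n := S.x_lt_x (Nat.sub_lt hn.1 one_pos) hn.2
  have hlt := S.knot_sub_lt r n hn
  have hmul := S.slope_mul hn
  constructor <;> nlinarith

theorem map_fst (hn : n ∈ Icc 1 (S.N r)) (p : ℝ × ℝ × ℝ) : (S.map r n p).1 = S.fstMap r n p.1 := by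
  have h := S.map_fst_sub r n hn p (S.knot (S.src r n) 0)
  rw [(S.map_knot r n hn).1] at h
  unfold fstMap
  linarith

theorem fstMap_x_zero : S.fstMap r n (S.x (S.src r n) 0) = S.x r (n - 1) := by
  simp [fstMap]

theorem fstMap_x_N (hn : n ∈ Icc 1 (S.N r)) :
    S.fstMap r n (S.x (S.src r n) (S.N (S.src r n))) = S.x r n := by
  unfold fstMap
  linarith [S.slope_mul hn]

theorem dist_fstMap (hn : n ∈ Icc 1 (S.N r)) (u v : ℝ) :
    dist (S.fstMap r n u) (S.fstMap r n v) = S.slope r n * dist u v := by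
  simp only [fstMap, Real.dist_eq, add_sub_add_left_eq_sub, ← mul_sub, sub_sub_sub_cancel_right,
    abs_mul, abs_of_pos (S.slope_mem_Ioo hn).1]

theorem fstMap_injective (hn : n ∈ Icc 1 (S.N r)) : Function.Injective (S.fstMap r n) :=
  fun u v h => dist_eq_zero.1 <| (mul_eq_zero.1 ((S.dist_fstMap hn u v).symm.trans
    (dist_eq_zero.2 h))).resolve_left (S.slope_mem_Ioo hn).1.ne'

theorem image_fstMap_interval (hn : n ∈ Icc 1 (S.N r)) :
    S.fstMap r n '' S.interval (S.src r n) = Icc (S.x r (n - 1)) (S.x r n) := by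
  have h : S.fstMap r n = fun u =>
      S.slope r n * u + (S.x r (n - 1) - S.slope r n * S.x (S.src r n) 0) :=
    funext fun u => by unfold fstMap; ring
  rw [h, interval, image_affine_Icc' (S.slope_mem_Ioo hn).1]
  congr 1 <;> linarith [S.slope_mul hn]

theorem fstMap_mem_Icc (hn : n ∈ Icc 1 (S.N r)) {u : ℝ} (hu : u ∈ S.interval (S.src r n)) :
    S.fstMap r n u ∈ Icc (S.x r (n - 1)) (S.x r n) :=
  S.image_fstMap_interval hn ▸ mem_image_of_mem _ hu

theorem mapsTo_fstMap_interval (hn : n ∈ Icc 1 (S.N r)) :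
    MapsTo (S.fstMap r n) (S.interval (S.src r n)) (S.interval r) := fun _ hu =>
  Icc_subset_Icc (S.x_le_x (Nat.zero_le _) ((Nat.sub_le n 1).trans hn.2)) (S.x_le_x hn.2 le_rfl)
    (S.fstMap_mem_Icc hn hu)

variable {S} {G : ι → Set (ℝ × ℝ × ℝ)}

theorem IsAttractor.exists_map_eq (hG : S.IsAttractor G) {p : ℝ × ℝ × ℝ} (hp : p ∈ G r) :
    ∃ n ∈ Icc 1 (S.N r), ∃ q ∈ G (S.src r n), S.map r n q = p := by
  rw [hG r] at hp
  simpa only [mem_iUnion₂, mem_image, exists_prop] using hp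

theorem IsAttractor.map_mem (hG : S.IsAttractor G) (hn : n ∈ Icc 1 (S.N r)) {q : ℝ × ℝ × ℝ}
    (hq : q ∈ G (S.src r n)) : S.map r n q ∈ G r := by
  rw [hG r]
  exact mem_biUnion hn (mem_image_of_mem _ hq)

theorem IsAttractor.one_le_N (hG : S.IsAttractor G) (hne : (G r).Nonempty) : 1 ≤ S.N r :=
  let ⟨_, hp⟩ := hne
  let ⟨_, hn, _⟩ := hG.exists_map_eq hp
  hn.1.trans hn.2

variable [Finite ι]

theorem IsAttractor.fst_image_subset_interval (hG : S.IsAttractor G) (hc : ∀ r, IsCompact (G r))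
    (r : ι) : Prod.fst '' G r ⊆ S.interval r := by
  obtain ⟨k, hk, hslope⟩ := exists_lt_forall_le_of_lt S.N fun r n hn => (S.slope_mem_Ioo hn).2
  have hne : ∀ r, (S.interval r).Nonempty := fun r => ⟨_, S.x_mem_interval (Nat.zero_le _)⟩
  have key := eq_zero_of_forall_le_mul (S := fun r => Prod.fst '' G r)
    (D := fun r t => infDist t (S.interval r)) hk (fun _ _ _ => infDist_nonneg)
    (fun r => bddAbove_infDist_image ((hc r).image continuous_fst).isBounded
      isCompact_Icc.isBounded (hne r)) <| by
    rintro r _ ⟨p, hp, rfl⟩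
    obtain ⟨n, hn, q, hq, rfl⟩ := hG.exists_map_eq hp
    refine Or.inr ⟨S.src r n, q.1, mem_image_of_mem _ hq, ?_⟩
    rw [S.map_fst hn]
    exact (infDist_le_mul_of_mapsTo (fun u v => (S.dist_fstMap hn u v).le) isCompact_Icc
      (hne _) (S.mapsTo_fstMap_interval hn) _).trans
      (mul_le_mul_of_nonneg_right (hslope r n hn) infDist_nonneg)
  exact fun t ht => (isClosed_Icc.mem_iff_infDist_zero (hne r)).2 (key r t ht)

theorem IsAttractor.interval_subset_fst_image (hG : S.IsAttractor G) (hc : ∀ r, IsCompact (G r))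
    (hne : ∀ r, (G r).Nonempty) (r : ι) : S.interval r ⊆ Prod.fst '' G r := by
  obtain ⟨k, hk, hslope⟩ := exists_lt_forall_le_of_lt S.N fun r n hn => (S.slope_mem_Ioo hn).2
  have hP : ∀ r, IsCompact (Prod.fst '' G r) := fun r => (hc r).image continuous_fst
  have key := eq_zero_of_forall_le_mul (S := S.interval)
    (D := fun r t => infDist t (Prod.fst '' G r)) hk (fun _ _ _ => infDist_nonneg)
    (fun r => bddAbove_infDist_image isCompact_Icc.isBounded (hP r).isBounded
      ((hne r).image _)) <| by
    intro r t ht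
    obtain ⟨n, hn, htn⟩ := exists_mem_Icc_pred_of_mem_Icc (hG.one_le_N (hne r)) ht
    rw [← S.image_fstMap_interval hn] at htn
    obtain ⟨u, hu, rfl⟩ := htn
    have hmaps : MapsTo (S.fstMap r n) (Prod.fst '' G (S.src r n)) (Prod.fst '' G r) := by
      rintro _ ⟨q, hq, rfl⟩
      exact ⟨S.map r n q, hG.map_mem hn hq, S.map_fst hn q⟩
    exact Or.inr ⟨S.src r n, u, hu, (infDist_le_mul_of_mapsTo
      (fun u v => (S.dist_fstMap hn u v).le) (hP _) ((hne _).image _) hmaps _).trans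
      (mul_le_mul_of_nonneg_right (hslope r n hn) infDist_nonneg)⟩
  exact fun t ht => ((hP r).isClosed.mem_iff_infDist_zero ((hne r).image _)).2 (key r t ht)

theorem IsAttractor.fst_image_eq (hG : S.IsAttractor G) (hc : ∀ r, IsCompact (G r))
    (hne : ∀ r, (G r).Nonempty) (r : ι) : Prod.fst '' G r = S.interval r :=
  (hG.fst_image_subset_interval hc r).antisymm (hG.interval_subset_fst_image hc hne r)

theorem IsAttractor.fst_mem_interval (hG : S.IsAttractor G) (hc : ∀ r, IsCompact (G r))
    (hne : ∀ r, (G r).Nonempty) {r : ι} {p : ℝ × ℝ × ℝ} (hp : p ∈ G r) : p.1 ∈ S.interval r :=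
  hG.fst_image_eq hc hne r ▸ mem_image_of_mem _ hp

theorem IsAttractor.exists_mem_fst_eq (hG : S.IsAttractor G) (hc : ∀ r, IsCompact (G r))
    (hne : ∀ r, (G r).Nonempty) {r : ι} {i : ℕ} (hi : i ≤ S.N r) :
    ∃ p ∈ G r, p.1 = S.x r i :=
  ((hG.fst_image_eq hc hne r).symm ▸ S.x_mem_interval hi : S.x r i ∈ Prod.fst '' G r)

theorem eq_of_fst_eq_of_forall_exists_map (hc : ∀ r, IsCompact (G r)) (c : ι → ℝ × ℝ × ℝ)
    (hstep : ∀ r, ∀ p ∈ G r, p.1 = (c r).1 → ∃ n ∈ Icc 1 (S.N r), ∃ q ∈ G (S.src r n),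
      q.1 = (c (S.src r n)).1 ∧ S.map r n q = p ∧ S.map r n (c (S.src r n)) = c r)
    {r : ι} {p : ℝ × ℝ × ℝ} (hp : p ∈ G r) (hpc : p.1 = (c r).1) : p = c r := by
  obtain ⟨k, hk, hv⟩ := exists_lt_forall_le_of_lt S.N S.vcoef_lt_one
  have key := eq_zero_of_forall_le_mul (S := fun r => {p ∈ G r | p.1 = (c r).1})
    (D := fun r p => vdist p (c r)) hk (fun _ _ _ => vdist_nonneg _ _)
    (fun r => by
      obtain ⟨C, hC⟩ := ((hc r).isBounded.insert (c r)).exists_vdist_le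
      exact ⟨C, forall_mem_image.2 fun p hp =>
        hC p (mem_insert_of_mem _ hp.1) (c r) (mem_insert _ _)⟩) <| by
    rintro r p ⟨hp, hpc⟩
    obtain ⟨n, hn, q, hq, hqc, rfl, hfix⟩ := hstep r p hp hpc
    refine Or.inr ⟨S.src r n, q, ⟨hq, hqc⟩, ?_⟩
    calc vdist (S.map r n q) (c r) = vdist (S.map r n q) (S.map r n (c (S.src r n))) := by
          rw [hfix]
      _ ≤ S.vcoef r n * vdist q (c (S.src r n)) := S.vdist_map_le r n hn _ _ hqc
      _ ≤ k * vdist q (c (S.src r n)) :=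
          mul_le_mul_of_nonneg_right (hv r n hn) (vdist_nonneg _ _)
  exact eq_of_fst_eq_of_vdist_eq_zero hpc (key r p ⟨hp, hpc⟩)

theorem IsAttractor.eq_knot_zero (hG : S.IsAttractor G) (hc : ∀ r, IsCompact (G r))
    (hne : ∀ r, (G r).Nonempty) {r : ι} {p : ℝ × ℝ × ℝ} (hp : p ∈ G r) (hpx : p.1 = S.x r 0) :
    p = S.knot r 0 := by
  refine eq_of_fst_eq_of_forall_exists_map (S := S) hc (fun r => S.knot r 0)
    (fun r p hp hpx => ?_) hp hpx
  obtain ⟨n, hn, q, hq, rfl⟩ := hG.exists_map_eq hp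
  rw [S.map_fst hn] at hpx
  have hmem := S.fstMap_mem_Icc hn (hG.fst_mem_interval hc hne hq)
  have hn1 : n - 1 = 0 := S.eq_of_x_eq ((Nat.sub_le n 1).trans hn.2) (Nat.zero_le _)
    (le_antisymm (by linarith [hmem.1]) (S.x_le_x (Nat.zero_le _) ((Nat.sub_le n 1).trans hn.2)))
  refine ⟨n, hn, q, hq, S.fstMap_injective hn ?_, rfl, by rw [(S.map_knot r n hn).1, hn1]⟩
  rw [hpx, S.fstMap_x_zero, hn1]

theorem IsAttractor.eq_knot_N (hG : S.IsAttractor G) (hc : ∀ r, IsCompact (G r))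
    (hne : ∀ r, (G r).Nonempty) {r : ι} {p : ℝ × ℝ × ℝ} (hp : p ∈ G r)
    (hpx : p.1 = S.x r (S.N r)) : p = S.knot r (S.N r) := by
  refine eq_of_fst_eq_of_forall_exists_map (S := S) hc (fun r => S.knot r (S.N r))
    (fun r p hp hpx => ?_) hp hpx
  obtain ⟨n, hn, q, hq, rfl⟩ := hG.exists_map_eq hp
  rw [S.map_fst hn] at hpx
  have hmem := S.fstMap_mem_Icc hn (hG.fst_mem_interval hc hne hq)
  have hnN : n = S.N r :=
    S.eq_of_x_eq hn.2 le_rfl (le_antisymm (S.x_le_x hn.2 le_rfl) (by linarith [hmem.2]))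
  refine ⟨n, hn, q, hq, S.fstMap_injective hn ?_, rfl, by rw [(S.map_knot r n hn).2, hnN]⟩
  rw [hpx, S.fstMap_x_N hn, hnN]

theorem IsAttractor.knot_mem (hG : S.IsAttractor G) (hc : ∀ r, IsCompact (G r))
    (hne : ∀ r, (G r).Nonempty) {r : ι} {n : ℕ} (hn : n ≤ S.N r) : S.knot r n ∈ G r := by
  have hN : ∀ s, S.knot s (S.N s) ∈ G s := fun s => by
    obtain ⟨p, hp, hpx⟩ := hG.exists_mem_fst_eq hc hne le_rfl
    rwa [← hG.eq_knot_N hc hne hp hpx]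
  rcases Nat.eq_zero_or_pos n with rfl | hpos
  · obtain ⟨p, hp, hpx⟩ := hG.exists_mem_fst_eq hc hne (Nat.zero_le (S.N r))
    rwa [← hG.eq_knot_zero hc hne hp hpx]
  · rw [← (S.map_knot r n ⟨hpos, hn⟩).2]
    exact hG.map_mem ⟨hpos, hn⟩ (hN _)

theorem IsAttractor.map_eq_map_of_lt (hG : S.IsAttractor G) (hc : ∀ r, IsCompact (G r))
    (hne : ∀ r, (G r).Nonempty) {r : ι} {n n' : ℕ} (hn : n ∈ Icc 1 (S.N r))
    (hn' : n' ∈ Icc 1 (S.N r)) (hlt : n < n') {p q : ℝ × ℝ × ℝ} (hp : p ∈ G (S.src r n))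
    (hq : q ∈ G (S.src r n')) (h : (S.map r n p).1 = (S.map r n' q).1) :
    S.map r n p = S.map r n' q := by
  rw [S.map_fst hn, S.map_fst hn'] at h
  have hpI := S.fstMap_mem_Icc hn (hG.fst_mem_interval hc hne hp)
  have hqI := S.fstMap_mem_Icc hn' (hG.fst_mem_interval hc hne hq)
  have hle : S.x r n ≤ S.x r (n' - 1) := S.x_le_x (by omega) ((Nat.sub_le n' 1).trans hn'.2)
  have hnn : n = n' - 1 :=
    S.eq_of_x_eq hn.2 ((Nat.sub_le n' 1).trans hn'.2) (by linarith [hpI.2, hqI.1])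
  have hp' : p = S.knot (S.src r n) (S.N (S.src r n)) := hG.eq_knot_N hc hne hp
    (S.fstMap_injective hn (by rw [S.fstMap_x_N hn]; linarith [hpI.2, hqI.1]))
  have hq' : q = S.knot (S.src r n') 0 := hG.eq_knot_zero hc hne hq
    (S.fstMap_injective hn' (by rw [S.fstMap_x_zero]; linarith [hpI.2, hqI.1]))
  rw [hp', hq', (S.map_knot r n hn).2, (S.map_knot r n' hn').1, hnn]

theorem IsAttractor.injOn_fst (hG : S.IsAttractor G) (hc : ∀ r, IsCompact (G r))
    (hne : ∀ r, (G r).Nonempty) (r : ι) : InjOn Prod.fst (G r) := by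
  obtain ⟨k, hk, hv⟩ := exists_lt_forall_le_of_lt S.N S.vcoef_lt_one
  have key := eq_zero_of_forall_le_mul
    (S := fun r => {pq : (ℝ × ℝ × ℝ) × (ℝ × ℝ × ℝ) | pq.1 ∈ G r ∧ pq.2 ∈ G r ∧ pq.1.1 = pq.2.1})
    (D := fun _ pq => vdist pq.1 pq.2) hk (fun _ _ _ => vdist_nonneg _ _)
    (fun r => by
      obtain ⟨C, hC⟩ := (hc r).isBounded.exists_vdist_le
      exact ⟨C, forall_mem_image.2 fun pq h => hC _ h.1 _ h.2.1⟩) <| by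
    rintro r ⟨p, q⟩ ⟨hp, hq, hpq⟩
    obtain ⟨n, hn, p', hp', rfl⟩ := hG.exists_map_eq hp
    obtain ⟨n', hn', q', hq', rfl⟩ := hG.exists_map_eq hq
    rcases lt_trichotomy n n' with hlt | rfl | hlt
    · exact Or.inl (by simp only [hG.map_eq_map_of_lt hc hne hn hn' hlt hp' hq' hpq, vdist_self])
    · have h' : p'.1 = q'.1 := S.fstMap_injective hn (by rwa [S.map_fst hn, S.map_fst hn] at hpq)
      exact Or.inr ⟨S.src r n, (p', q'), ⟨hp', hq', h'⟩, (S.vdist_map_le r n hn _ _ h').trans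
        (mul_le_mul_of_nonneg_right (hv r n hn) (vdist_nonneg _ _))⟩
    · exact Or.inl (by simp only [hG.map_eq_map_of_lt hc hne hn' hn hlt hq' hp' hpq.symm,
        vdist_self])
  exact fun p hp q hq h => eq_of_fst_eq_of_vdist_eq_zero h (key r (p, q) ⟨hp, hq, h⟩)

theorem IsAttractor.exists_continuousOn_graph (hG : S.IsAttractor G) (hc : ∀ r, IsCompact (G r))
    (hne : ∀ r, (G r).Nonempty) (r : ι) :
    ∃ f : ℝ → ℝ × ℝ, ContinuousOn f (S.interval r) ∧ G r = (fun x => (x, f x)) '' S.interval r ∧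
      ∀ n ≤ S.N r, f (S.x r n) = (S.knot r n).2 := by
  obtain ⟨f, hfc, hfG⟩ := (hc r).exists_continuousOn_graph_eq (hne r) (hG.injOn_fst hc hne r)
  rw [hG.fst_image_eq hc hne] at hfc hfG
  refine ⟨f, hfc, hfG, fun n hn => ?_⟩
  have hmem := hG.knot_mem hc hne hn
  rw [hfG] at hmem
  obtain ⟨x, -, hx⟩ := hmem
  obtain ⟨h₁, h₂⟩ := Prod.ext_iff.1 hx
  dsimp only at h₁ h₂
  subst h₁
  exact h₂

end InterpolationSystem

/-- The joint numbering of the maps into `G r`: `w r 0 1, …, w r 0 (K r 0)`, then `w r 1 1, …`. -/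
def splitIndex (K : Fin 2 → ℕ) (n : ℕ) : Fin 2 × ℕ := if n ≤ K 0 then (0, n) else (1, n - K 0)

theorem splitIndex_cases {K : Fin 2 → ℕ} {n : ℕ} (hn : n ∈ Icc 1 (K 0 + K 1)) :
    (n ∈ Icc 1 (K 0) ∧ splitIndex K n = (0, n)) ∨
      ∃ m ∈ Icc 1 (K 1), n = K 0 + m ∧ splitIndex K n = (1, m) := by
  obtain ⟨h₁, h₂⟩ := hn
  unfold splitIndex
  split_ifs with h
  · exact Or.inl ⟨⟨h₁, h⟩, rfl⟩
  · exact Or.inr ⟨n - K 0, ⟨by omega, by omega⟩, by omega, rfl⟩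

theorem splitIndex_snd_mem {K : Fin 2 → ℕ} {n : ℕ} (hn : n ∈ Icc 1 (K 0 + K 1)) :
    (splitIndex K n).2 ∈ Icc 1 (K (splitIndex K n).1) := by
  rcases splitIndex_cases hn with ⟨h, he⟩ | ⟨m, h, -, he⟩ <;> rw [he] <;> exact h

theorem biUnion_Icc_splitIndex {α : Type*} (K : Fin 2 → ℕ) (F : Fin 2 → ℕ → Set α) :
    ⋃ n ∈ Icc 1 (K 0 + K 1), F (splitIndex K n).1 (splitIndex K n).2 =
      (⋃ n ∈ Icc 1 (K 0), F 0 n) ∪ ⋃ n ∈ Icc 1 (K 1), F 1 n := by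
  ext p
  simp only [mem_union, mem_iUnion₂]
  constructor
  · rintro ⟨n, hn, hp⟩
    rcases splitIndex_cases hn with ⟨h, he⟩ | ⟨m, h, -, he⟩ <;> rw [he] at hp
    exacts [Or.inl ⟨n, h, hp⟩, Or.inr ⟨_, h, hp⟩]
  · rintro (⟨n, ⟨h₁, h₂⟩, hp⟩ | ⟨n, ⟨h₁, h₂⟩, hp⟩)
    · refine ⟨n, ⟨h₁, h₂.trans (Nat.le_add_right _ _)⟩, ?_⟩
      rwa [splitIndex, if_pos h₂]
    · refine ⟨K 0 + n, ⟨by omega, by omega⟩, ?_⟩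
      rwa [splitIndex, if_neg (by omega), Nat.add_sub_cancel_left]

theorem sub_lt_sub_of_strictMonoOn {x : ℕ → ℝ} {N n : ℕ} (hx : StrictMonoOn x (Iic N))
    (hN : 2 ≤ N) (hn : n ∈ Icc 1 N) : x n - x (n - 1) < x N - x 0 := by
  have hle : ∀ {i j}, i ≤ j → j ≤ N → x i ≤ x j := fun hij hj =>
    hx.monotoneOn (mem_Iic.2 (hij.trans hj)) (mem_Iic.2 hj) hij
  rcases hn.2.lt_or_eq with h | h
  · linarith [hx (mem_Iic.2 hn.2) (mem_Iic.2 le_rfl) h, hle (Nat.zero_le (n - 1)) (by omega)]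
  · linarith [hx (mem_Iic.2 (Nat.zero_le N)) (mem_Iic.2 (by omega : n - 1 ≤ N))
      (by omega : 0 < n - 1), hle h.le le_rfl]

theorem stmt_12_general
    (N M : ℕ) (hN : 2 ≤ N) (hM : 2 ≤ M)
    (x1 y1 z1 x2 y2 z2 : ℕ → ℝ)
    (hx1 : ∀ i, i < N → x1 i < x1 (i + 1))
    (hx2 : ∀ j, j < M → x2 j < x2 (j + 1))
    (hstar1 : ∀ i, 1 ≤ i → i ≤ N → x1 i - x1 (i - 1) < x2 M - x2 0)
    (hstar2 : ∀ j, 1 ≤ j → j ≤ M → x2 j - x2 (j - 1) < x1 N - x1 0)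
    (K : Fin 2 → Fin 2 → ℕ)
    (hK1 : K 0 0 + K 0 1 = N) (hK2 : K 1 0 + K 1 1 = M)
    (a b c d e f α β γ : Fin 2 → Fin 2 → ℕ → ℝ)
    (hα : ∀ r s n, 1 ≤ n → n ≤ K r s → |α r s n| < 1)
    (hβγ : ∀ r s n, 1 ≤ n → n ≤ K r s → |β r s n| + |γ r s n| < 1)
    (w : Fin 2 → Fin 2 → ℕ → ℝ × ℝ × ℝ → ℝ × ℝ × ℝ)
    (hw : ∀ r s n p, w r s n p =
      (a r s n * p.1 + b r s n,
       c r s n * p.1 + α r s n * p.2.1 + β r s n * p.2.2 + d r s n,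
       e r s n * p.1 + γ r s n * p.2.2 + f r s n))
    (hj11 : ∀ n, 1 ≤ n → n ≤ K 0 0 →
      w 0 0 n (x1 0, y1 0, z1 0) = (x1 (n - 1), y1 (n - 1), z1 (n - 1)) ∧
      w 0 0 n (x1 N, y1 N, z1 N) = (x1 n, y1 n, z1 n))
    (hj12 : ∀ n, 1 ≤ n → n ≤ K 0 1 →
      w 0 1 n (x2 0, y2 0, z2 0) =
        (x1 (K 0 0 + n - 1), y1 (K 0 0 + n - 1), z1 (K 0 0 + n - 1)) ∧
      w 0 1 n (x2 M, y2 M, z2 M) = (x1 (K 0 0 + n), y1 (K 0 0 + n), z1 (K 0 0 + n)))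
    (hj21 : ∀ n, 1 ≤ n → n ≤ K 1 0 →
      w 1 0 n (x1 0, y1 0, z1 0) = (x2 (n - 1), y2 (n - 1), z2 (n - 1)) ∧
      w 1 0 n (x1 N, y1 N, z1 N) = (x2 n, y2 n, z2 n))
    (hj22 : ∀ n, 1 ≤ n → n ≤ K 1 1 →
      w 1 1 n (x2 0, y2 0, z2 0) =
        (x2 (K 1 0 + n - 1), y2 (K 1 0 + n - 1), z2 (K 1 0 + n - 1)) ∧
      w 1 1 n (x2 M, y2 M, z2 M) = (x2 (K 1 0 + n), y2 (K 1 0 + n), z2 (K 1 0 + n)))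
    (G1 G2 : Set (ℝ × ℝ × ℝ))
    (hG1ne : G1.Nonempty) (hG1c : IsCompact G1) (hG2ne : G2.Nonempty) (hG2c : IsCompact G2)
    (hG1 : G1 = (⋃ n ∈ Set.Icc 1 (K 0 0), w 0 0 n '' G1) ∪ (⋃ n ∈ Set.Icc 1 (K 0 1), w 0 1 n '' G2))
    (hG2 : G2 = (⋃ n ∈ Set.Icc 1 (K 1 0), w 1 0 n '' G1) ∪ (⋃ n ∈ Set.Icc 1 (K 1 1), w 1 1 n '' G2)) :
    ∃ f1 f2 : ℝ → ℝ × ℝ,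
      ContinuousOn f1 (Set.Icc (x1 0) (x1 N)) ∧ ContinuousOn f2 (Set.Icc (x2 0) (x2 M)) ∧
      G1 = (fun x => (x, f1 x)) '' Set.Icc (x1 0) (x1 N) ∧
      G2 = (fun x => (x, f2 x)) '' Set.Icc (x2 0) (x2 M) ∧
      (∀ n, n ≤ N → f1 (x1 n) = (y1 n, z1 n)) ∧
      (∀ m, m ≤ M → f2 (x2 m) = (y2 m, z2 m)) := by
  subst hK1 hK2
  let X : Fin 2 → ℕ → ℝ := ![x1, x2]
  let Y : Fin 2 → ℕ → ℝ := ![y1, y2]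
  let Z : Fin 2 → ℕ → ℝ := ![z1, z2]
  have hmono : ∀ r, StrictMonoOn (X r) (Iic (K r 0 + K r 1)) :=
    Fin.forall_fin_two.2 ⟨strictMonoOn_Iic_of_lt_succ hx1, strictMonoOn_Iic_of_lt_succ hx2⟩
  have hstar : ∀ r s, ∀ n ∈ Icc 1 (K r 0 + K r 1),
      X r n - X r (n - 1) < X s (K s 0 + K s 1) - X s 0 :=
    Fin.forall_fin_two.2 ⟨Fin.forall_fin_two.2 ⟨fun n => sub_lt_sub_of_strictMonoOn (hmono 0) hN,
      fun n hn => hstar1 n hn.1 hn.2⟩, Fin.forall_fin_two.2 ⟨fun n hn => hstar2 n hn.1 hn.2,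
      fun n => sub_lt_sub_of_strictMonoOn (hmono 1) hM⟩⟩
  let S : InterpolationSystem (Fin 2) :=
    { N := fun r => K r 0 + K r 1
      knot := fun r i => (X r i, Y r i, Z r i)
      src := fun r n => (splitIndex (K r) n).1
      map := fun r n => Function.uncurry (w r) (splitIndex (K r) n)
      slope := fun r n => Function.uncurry (a r) (splitIndex (K r) n)
      vcoef := fun r n => Function.uncurry (fun s m => max |α r s m| (|β r s m| + |γ r s m|))
        (splitIndex (K r) n)
      strictMonoOn_knot_fst := Fin.forall_fin_two.2 ⟨hmono 0, hmono 1⟩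
      map_fst_sub := fun r n _ p q => by simp only [Function.uncurry, hw]; ring
      vdist_map_le := fun r n _ p q => vdist_le_of_apply_eq (hw _ _ _)
      vcoef_lt_one := fun r n hn =>
        have h := splitIndex_snd_mem hn
        max_lt (hα _ _ _ h.1 h.2) (hβγ _ _ _ h.1 h.2)
      map_knot := by
        refine Fin.forall_fin_two.2 ⟨fun n hn => ?_, fun n hn => ?_⟩ <;>
          rcases splitIndex_cases hn with ⟨h, he⟩ | ⟨m, h, rfl, he⟩ <;> simp only [he]
        exacts [hj11 n h.1 h.2, hj12 m h.1 h.2, hj21 n h.1 h.2, hj22 m h.1 h.2]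
      knot_sub_lt := fun r n hn => hstar r _ n hn }
  have hG : S.IsAttractor ![G1, G2] := Fin.forall_fin_two.2
    ⟨hG1.trans (biUnion_Icc_splitIndex (K 0) fun s m => w 0 s m '' ![G1, G2] s).symm,
      hG2.trans (biUnion_Icc_splitIndex (K 1) fun s m => w 1 s m '' ![G1, G2] s).symm⟩
  have hc : ∀ r, IsCompact (![G1, G2] r) := Fin.forall_fin_two.2 ⟨hG1c, hG2c⟩
  have hne : ∀ r, (![G1, G2] r).Nonempty := Fin.forall_fin_two.2 ⟨hG1ne, hG2ne⟩
  obtain ⟨f1, hf1c, hf1G, hf1⟩ := hG.exists_continuousOn_graph hc hne 0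
  obtain ⟨f2, hf2c, hf2G, hf2⟩ := hG.exists_continuousOn_graph hc hne 1
  exact ⟨f1, f2, hf1c, hf2c, hf1G, hf2G, hf1, hf2⟩

theorem stmt_12
    (N M : ℕ) (hN : 2 ≤ N) (hM : 2 ≤ M)
    (x1 y1 z1 x2 y2 z2 : ℕ → ℝ)
    (hx1 : ∀ i, i < N → x1 i < x1 (i + 1))
    (hx2 : ∀ j, j < M → x2 j < x2 (j + 1))
    (hstar1 : ∀ i, 1 ≤ i → i ≤ N → x1 i - x1 (i - 1) < x2 M - x2 0)
    (hstar2 : ∀ j, 1 ≤ j → j ≤ M → x2 j - x2 (j - 1) < x1 N - x1 0)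
    (K : Fin 2 → Fin 2 → ℕ)
    (hK1 : K 0 0 + K 0 1 = N) (hK2 : K 1 0 + K 1 1 = M)
    (a b c d e f α β γ : Fin 2 → Fin 2 → ℕ → ℝ)
    (hα : ∀ r s n, 1 ≤ n → n ≤ K r s → |α r s n| < 1)
    (hγ : ∀ r s n, 1 ≤ n → n ≤ K r s → |γ r s n| < 1)
    (hβγ : ∀ r s n, 1 ≤ n → n ≤ K r s → |β r s n| + |γ r s n| < 1)
    (w : Fin 2 → Fin 2 → ℕ → ℝ × ℝ × ℝ → ℝ × ℝ × ℝ)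
    (hw : ∀ r s n p, w r s n p =
      (a r s n * p.1 + b r s n,
       c r s n * p.1 + α r s n * p.2.1 + β r s n * p.2.2 + d r s n,
       e r s n * p.1 + γ r s n * p.2.2 + f r s n))
    (hj11 : ∀ n, 1 ≤ n → n ≤ K 0 0 →
      w 0 0 n (x1 0, y1 0, z1 0) = (x1 (n - 1), y1 (n - 1), z1 (n - 1)) ∧
      w 0 0 n (x1 N, y1 N, z1 N) = (x1 n, y1 n, z1 n))
    (hj12 : ∀ n, 1 ≤ n → n ≤ K 0 1 →
      w 0 1 n (x2 0, y2 0, z2 0) =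
        (x1 (K 0 0 + n - 1), y1 (K 0 0 + n - 1), z1 (K 0 0 + n - 1)) ∧
      w 0 1 n (x2 M, y2 M, z2 M) = (x1 (K 0 0 + n), y1 (K 0 0 + n), z1 (K 0 0 + n)))
    (hj21 : ∀ n, 1 ≤ n → n ≤ K 1 0 →
      w 1 0 n (x1 0, y1 0, z1 0) = (x2 (n - 1), y2 (n - 1), z2 (n - 1)) ∧
      w 1 0 n (x1 N, y1 N, z1 N) = (x2 n, y2 n, z2 n))
    (hj22 : ∀ n, 1 ≤ n → n ≤ K 1 1 →
      w 1 1 n (x2 0, y2 0, z2 0) =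
        (x2 (K 1 0 + n - 1), y2 (K 1 0 + n - 1), z2 (K 1 0 + n - 1)) ∧
      w 1 1 n (x2 M, y2 M, z2 M) = (x2 (K 1 0 + n), y2 (K 1 0 + n), z2 (K 1 0 + n)))
    (G1 G2 : Set (ℝ × ℝ × ℝ))
    (hG1ne : G1.Nonempty) (hG1c : IsCompact G1) (hG2ne : G2.Nonempty) (hG2c : IsCompact G2)
    (hG1 : G1 = (⋃ n ∈ Set.Icc 1 (K 0 0), w 0 0 n '' G1) ∪ (⋃ n ∈ Set.Icc 1 (K 0 1), w 0 1 n '' G2))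
    (hG2 : G2 = (⋃ n ∈ Set.Icc 1 (K 1 0), w 1 0 n '' G1) ∪ (⋃ n ∈ Set.Icc 1 (K 1 1), w 1 1 n '' G2)) :
    ∃ f1 f2 : ℝ → ℝ × ℝ,
      ContinuousOn f1 (Set.Icc (x1 0) (x1 N)) ∧ ContinuousOn f2 (Set.Icc (x2 0) (x2 M)) ∧
      G1 = (fun x => (x, f1 x)) '' Set.Icc (x1 0) (x1 N) ∧
      G2 = (fun x => (x, f2 x)) '' Set.Icc (x2 0) (x2 M) ∧
      (∀ n, n ≤ N → f1 (x1 n) = (y1 n, z1 n)) ∧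
      (∀ m, m ≤ M → f2 (x2 m) = (y2 m, z2 m)) :=
  stmt_12_general N M hN hM x1 y1 z1 x2 y2 z2 hx1 hx2 hstar1 hstar2 K hK1 hK2 a b c d e f α β γ hα
    hβγ w hw hj11 hj12 hj21 hj22 G1 G2 hG1ne hG1c hG2ne hG2c hG1 hG2
end

section
/- Let G^1, G^2 ⊂ ℝ³ be the (unique) nonempty compact sets satisfying the invariance equations of the generalized graph-directed IFS, and let f^1 = (f_1^1, f_2^1) and f^2 = (f_1^2, f_2^2) be the continuous vector-valued functions whose graphs are G^1 and G^2. Then the projection of G^r onto ℝ² given by (x, y, z) ↦ (x, y) equals the graph {(x, f_1^r(x)) : x ∈ I^r} of the continuous function f_1^r (the coalescence hidden-variable fractal interpolation function, r = 1, 2, with I^1 = [x_0^1, x_N^1], I^2 = [x_0^2, x_M^2]), and f_1^1(x_n^1) = y_n^1 for all 0 ≤ n ≤ N and f_1^2(x_m^2) = y_m^2 for all 0 ≤ m ≤ M. -/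
open Set

lemma stmt13_aux (u v : ℝ)
    (hu : ∃ C t : ℝ, |C| < 1 ∧ (t = u ∨ t = v) ∧ u = C * t)
    (hv : ∃ C t : ℝ, |C| < 1 ∧ (t = u ∨ t = v) ∧ v = C * t) :
    u = 0 ∧ v = 0 := by
  obtain ⟨C1, t1, hC1, ht1, hu⟩ := hu
  obtain ⟨C2, t2, hC2, ht2, hv⟩ := hv
  have ht1' : |t1| ≤ max |u| |v| := by
    rcases ht1 with h | h <;> rw [h]
    · exact le_max_left _ _
    · exact le_max_right _ _
  have ht2' : |t2| ≤ max |u| |v| := by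
    rcases ht2 with h | h <;> rw [h]
    · exact le_max_left _ _
    · exact le_max_right _ _
  have h1 : |u| ≤ |C1| * max |u| |v| := by
    calc |u| = |C1| * |t1| := by rw [hu, abs_mul]
    _ ≤ |C1| * max |u| |v| := mul_le_mul_of_nonneg_left ht1' (abs_nonneg _)
  have h2 : |v| ≤ |C2| * max |u| |v| := by
    calc |v| = |C2| * |t2| := by rw [hv, abs_mul]
    _ ≤ |C2| * max |u| |v| := mul_le_mul_of_nonneg_left ht2' (abs_nonneg _)
  have hm : max |u| |v| ≤ 0 := by
    rcases max_cases |u| |v| with ⟨h, _⟩ | ⟨h, _⟩ <;> rw [h] at h1 h2 ⊢ <;>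
      nlinarith [abs_nonneg u, abs_nonneg v, abs_nonneg C1, abs_nonneg C2]
  have hu0 : |u| = 0 := le_antisymm (le_trans (le_max_left _ _) hm) (abs_nonneg u)
  have hv0 : |v| = 0 := le_antisymm (le_trans (le_max_right _ _) hm) (abs_nonneg v)
  exact ⟨abs_eq_zero.mp hu0, abs_eq_zero.mp hv0⟩

lemma stmt13_mono (x : ℕ → ℝ) (N : ℕ) (h : ∀ i, i < N → x i < x (i + 1)) :
    ∀ i j, i ≤ j → j ≤ N → x i ≤ x j := by
  intro i j hij hjN
  induction j with
  | zero => rw [Nat.le_zero.mp hij]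
  | succ k ih =>
    rcases Nat.lt_or_ge i (k + 1) with hlt | hge
    · exact le_trans (ih (Nat.lt_succ_iff.mp hlt) (le_trans (Nat.le_succ k) hjN))
        (le_of_lt (h k (by omega)))
    · rw [le_antisymm hij hge]

lemma stmt13_rel (wmap : ℝ × ℝ × ℝ → ℝ × ℝ × ℝ) (a b c d e f α β γ : ℝ)
    (hwf : ∀ p : ℝ × ℝ × ℝ, wmap p =
      (a * p.1 + b, c * p.1 + α * p.2.1 + β * p.2.2 + d, e * p.1 + γ * p.2.2 + f))
    (G H : Set (ℝ × ℝ × ℝ)) (himg : wmap '' G ⊆ H)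
    (fG fH : ℝ → ℝ × ℝ) (IG IH : Set ℝ)
    (hgG : G = (fun x => (x, fG x)) '' IG) (hgH : H = (fun x => (x, fH x)) '' IH)
    (xs ys zs xt yt zt : ℝ) (hxs : xs ∈ IG)
    (hjoin : wmap (xs, ys, zs) = (xt, yt, zt)) :
    (fH xt).1 - yt = α * ((fG xs).1 - ys) + β * ((fG xs).2 - zs) ∧
      (fH xt).2 - zt = γ * ((fG xs).2 - zs) := by
  have hP : (xs, fG xs) ∈ G := by rw [hgG]; exact ⟨xs, hxs, rfl⟩
  have hQ : wmap (xs, fG xs) ∈ H := himg ⟨_, hP, rfl⟩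
  rw [hgH] at hQ
  obtain ⟨x', hx', hx'eq⟩ := hQ
  rw [hwf] at hjoin hx'eq
  simp only [Prod.mk.injEq] at hjoin hx'eq
  obtain ⟨hj1, hj2, hj3⟩ := hjoin
  obtain ⟨hx1, hx23⟩ := hx'eq
  have hx't : x' = xt := by rw [hx1]; exact hj1
  rw [hx't] at hx23
  constructor
  · have : (fH xt).1 = c * xs + α * (fG xs).1 + β * (fG xs).2 + d := by rw [hx23]
    rw [this, ← hj2]; ring
  · have : (fH xt).2 = e * xs + γ * (fG xs).2 + f := by rw [hx23]
    rw [this, ← hj3]; ring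

theorem stmt_13
    (N M : ℕ) (hN : 2 ≤ N) (hM : 2 ≤ M)
    (x1 y1 z1 x2 y2 z2 : ℕ → ℝ)
    (hx1 : ∀ i, i < N → x1 i < x1 (i + 1))
    (hx2 : ∀ j, j < M → x2 j < x2 (j + 1))
    (hstar1 : ∀ i, 1 ≤ i → i ≤ N → x1 i - x1 (i - 1) < x2 M - x2 0)
    (hstar2 : ∀ j, 1 ≤ j → j ≤ M → x2 j - x2 (j - 1) < x1 N - x1 0)
    (K : Fin 2 → Fin 2 → ℕ)
    (hK1 : K 0 0 + K 0 1 = N) (hK2 : K 1 0 + K 1 1 = M)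
    (a b c d e f α β γ : Fin 2 → Fin 2 → ℕ → ℝ)
    (hα : ∀ r s n, 1 ≤ n → n ≤ K r s → |α r s n| < 1)
    (hγ : ∀ r s n, 1 ≤ n → n ≤ K r s → |γ r s n| < 1)
    (hβγ : ∀ r s n, 1 ≤ n → n ≤ K r s → |β r s n| + |γ r s n| < 1)
    (w : Fin 2 → Fin 2 → ℕ → ℝ × ℝ × ℝ → ℝ × ℝ × ℝ)
    (hw : ∀ r s n p, w r s n p =
      (a r s n * p.1 + b r s n,
       c r s n * p.1 + α r s n * p.2.1 + β r s n * p.2.2 + d r s n,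
       e r s n * p.1 + γ r s n * p.2.2 + f r s n))
    (hj11 : ∀ n, 1 ≤ n → n ≤ K 0 0 →
      w 0 0 n (x1 0, y1 0, z1 0) = (x1 (n - 1), y1 (n - 1), z1 (n - 1)) ∧
      w 0 0 n (x1 N, y1 N, z1 N) = (x1 n, y1 n, z1 n))
    (hj12 : ∀ n, 1 ≤ n → n ≤ K 0 1 →
      w 0 1 n (x2 0, y2 0, z2 0) =
        (x1 (K 0 0 + n - 1), y1 (K 0 0 + n - 1), z1 (K 0 0 + n - 1)) ∧
      w 0 1 n (x2 M, y2 M, z2 M) = (x1 (K 0 0 + n), y1 (K 0 0 + n), z1 (K 0 0 + n)))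
    (hj21 : ∀ n, 1 ≤ n → n ≤ K 1 0 →
      w 1 0 n (x1 0, y1 0, z1 0) = (x2 (n - 1), y2 (n - 1), z2 (n - 1)) ∧
      w 1 0 n (x1 N, y1 N, z1 N) = (x2 n, y2 n, z2 n))
    (hj22 : ∀ n, 1 ≤ n → n ≤ K 1 1 →
      w 1 1 n (x2 0, y2 0, z2 0) =
        (x2 (K 1 0 + n - 1), y2 (K 1 0 + n - 1), z2 (K 1 0 + n - 1)) ∧
      w 1 1 n (x2 M, y2 M, z2 M) = (x2 (K 1 0 + n), y2 (K 1 0 + n), z2 (K 1 0 + n)))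
    (G1 G2 : Set (ℝ × ℝ × ℝ))
    (hG1ne : G1.Nonempty) (hG1c : IsCompact G1) (hG2ne : G2.Nonempty) (hG2c : IsCompact G2)
    (hG1 : G1 = (⋃ n ∈ Set.Icc 1 (K 0 0), w 0 0 n '' G1) ∪ (⋃ n ∈ Set.Icc 1 (K 0 1), w 0 1 n '' G2))
    (hG2 : G2 = (⋃ n ∈ Set.Icc 1 (K 1 0), w 1 0 n '' G1) ∪ (⋃ n ∈ Set.Icc 1 (K 1 1), w 1 1 n '' G2))
    (f1 f2 : ℝ → ℝ × ℝ)
    (hf1c : ContinuousOn f1 (Set.Icc (x1 0) (x1 N))) (hf2c : ContinuousOn f2 (Set.Icc (x2 0) (x2 M)))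
    (hgr1 : G1 = (fun x => (x, f1 x)) '' Set.Icc (x1 0) (x1 N))
    (hgr2 : G2 = (fun x => (x, f2 x)) '' Set.Icc (x2 0) (x2 M)) :
    ((fun p : ℝ × ℝ × ℝ => (p.1, p.2.1)) '' G1 = (fun x => (x, (f1 x).1)) '' Set.Icc (x1 0) (x1 N)) ∧
    ((fun p : ℝ × ℝ × ℝ => (p.1, p.2.1)) '' G2 = (fun x => (x, (f2 x).1)) '' Set.Icc (x2 0) (x2 M)) ∧
    ContinuousOn (fun x => (f1 x).1) (Set.Icc (x1 0) (x1 N)) ∧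
    ContinuousOn (fun x => (f2 x).1) (Set.Icc (x2 0) (x2 M)) ∧
    (∀ n, n ≤ N → (f1 (x1 n)).1 = y1 n) ∧
    (∀ m, m ≤ M → (f2 (x2 m)).1 = y2 m) := by

  -- monotonicity and membership of the nodes
  have hmono1 := stmt13_mono x1 N hx1
  have hmono2 := stmt13_mono x2 M hx2
  have hx1mem : ∀ n, n ≤ N → x1 n ∈ Set.Icc (x1 0) (x1 N) :=
    fun n hn => ⟨hmono1 0 n (Nat.zero_le _) hn, hmono1 n N hn le_rfl⟩
  have hx2mem : ∀ m, m ≤ M → x2 m ∈ Set.Icc (x2 0) (x2 M) :=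
    fun m hm => ⟨hmono2 0 m (Nat.zero_le _) hm, hmono2 m M hm le_rfl⟩
  -- the pieces of the invariance equations
  have hsub11 : ∀ n, 1 ≤ n → n ≤ K 0 0 → w 0 0 n '' G1 ⊆ G1 := by
    intro n h1 h2 p hp
    rw [hG1]; exact Or.inl (Set.mem_biUnion ⟨h1, h2⟩ hp)
  have hsub12 : ∀ n, 1 ≤ n → n ≤ K 0 1 → w 0 1 n '' G2 ⊆ G1 := by
    intro n h1 h2 p hp
    rw [hG1]; exact Or.inr (Set.mem_biUnion ⟨h1, h2⟩ hp)
  have hsub21 : ∀ n, 1 ≤ n → n ≤ K 1 0 → w 1 0 n '' G1 ⊆ G2 := by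
    intro n h1 h2 p hp
    rw [hG2]; exact Or.inl (Set.mem_biUnion ⟨h1, h2⟩ hp)
  have hsub22 : ∀ n, 1 ≤ n → n ≤ K 1 1 → w 1 1 n '' G2 ⊆ G2 := by
    intro n h1 h2 p hp
    rw [hG2]; exact Or.inr (Set.mem_biUnion ⟨h1, h2⟩ hp)
  -- endpoint relations
  have h1L : ∃ A B C t s : ℝ, |A| < 1 ∧ |C| < 1 ∧
      ((t = (f1 (x1 0)).1 - y1 0 ∧ s = (f1 (x1 0)).2 - z1 0) ∨
        (t = (f2 (x2 0)).1 - y2 0 ∧ s = (f2 (x2 0)).2 - z2 0)) ∧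
      (f1 (x1 0)).1 - y1 0 = A * t + B * s ∧ (f1 (x1 0)).2 - z1 0 = C * s := by
    by_cases hK : 1 ≤ K 0 0
    · have hL := (hj11 1 le_rfl hK).1
      simp only [Nat.sub_self] at hL
      have hr := stmt13_rel (w 0 0 1) (a 0 0 1) (b 0 0 1) (c 0 0 1) (d 0 0 1) (e 0 0 1)
        (f 0 0 1) (α 0 0 1) (β 0 0 1) (γ 0 0 1) (hw 0 0 1) G1 G1 (hsub11 1 le_rfl hK)
        f1 f1 _ _ hgr1 hgr1 (x1 0) (y1 0) (z1 0) (x1 0) (y1 0) (z1 0)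
        (hx1mem 0 (Nat.zero_le _)) hL
      exact ⟨_, _, _, _, _, hα 0 0 1 le_rfl hK, hγ 0 0 1 le_rfl hK,
        Or.inl ⟨rfl, rfl⟩, hr.1, hr.2⟩
    · have hK0 : K 0 0 = 0 := by omega
      have hK01 : 1 ≤ K 0 1 := by omega
      have hL := (hj12 1 le_rfl hK01).1
      rw [hK0] at hL
      simp only [Nat.zero_add, Nat.sub_self] at hL
      have hr := stmt13_rel (w 0 1 1) (a 0 1 1) (b 0 1 1) (c 0 1 1) (d 0 1 1) (e 0 1 1)
        (f 0 1 1) (α 0 1 1) (β 0 1 1) (γ 0 1 1) (hw 0 1 1) G2 G1 (hsub12 1 le_rfl hK01)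
        f2 f1 _ _ hgr2 hgr1 (x2 0) (y2 0) (z2 0) (x1 0) (y1 0) (z1 0)
        (hx2mem 0 (Nat.zero_le _)) hL
      exact ⟨_, _, _, _, _, hα 0 1 1 le_rfl hK01, hγ 0 1 1 le_rfl hK01,
        Or.inr ⟨rfl, rfl⟩, hr.1, hr.2⟩
  have h2L : ∃ A B C t s : ℝ, |A| < 1 ∧ |C| < 1 ∧
      ((t = (f1 (x1 0)).1 - y1 0 ∧ s = (f1 (x1 0)).2 - z1 0) ∨
        (t = (f2 (x2 0)).1 - y2 0 ∧ s = (f2 (x2 0)).2 - z2 0)) ∧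
      (f2 (x2 0)).1 - y2 0 = A * t + B * s ∧ (f2 (x2 0)).2 - z2 0 = C * s := by
    by_cases hK : 1 ≤ K 1 0
    · have hL := (hj21 1 le_rfl hK).1
      simp only [Nat.sub_self] at hL
      have hr := stmt13_rel (w 1 0 1) (a 1 0 1) (b 1 0 1) (c 1 0 1) (d 1 0 1) (e 1 0 1)
        (f 1 0 1) (α 1 0 1) (β 1 0 1) (γ 1 0 1) (hw 1 0 1) G1 G2 (hsub21 1 le_rfl hK)
        f1 f2 _ _ hgr1 hgr2 (x1 0) (y1 0) (z1 0) (x2 0) (y2 0) (z2 0)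
        (hx1mem 0 (Nat.zero_le _)) hL
      exact ⟨_, _, _, _, _, hα 1 0 1 le_rfl hK, hγ 1 0 1 le_rfl hK,
        Or.inl ⟨rfl, rfl⟩, hr.1, hr.2⟩
    · have hK0 : K 1 0 = 0 := by omega
      have hK11 : 1 ≤ K 1 1 := by omega
      have hL := (hj22 1 le_rfl hK11).1
      rw [hK0] at hL
      simp only [Nat.zero_add, Nat.sub_self] at hL
      have hr := stmt13_rel (w 1 1 1) (a 1 1 1) (b 1 1 1) (c 1 1 1) (d 1 1 1) (e 1 1 1)
        (f 1 1 1) (α 1 1 1) (β 1 1 1) (γ 1 1 1) (hw 1 1 1) G2 G2 (hsub22 1 le_rfl hK11)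
        f2 f2 _ _ hgr2 hgr2 (x2 0) (y2 0) (z2 0) (x2 0) (y2 0) (z2 0)
        (hx2mem 0 (Nat.zero_le _)) hL
      exact ⟨_, _, _, _, _, hα 1 1 1 le_rfl hK11, hγ 1 1 1 le_rfl hK11,
        Or.inr ⟨rfl, rfl⟩, hr.1, hr.2⟩
  have h1R : ∃ A B C t s : ℝ, |A| < 1 ∧ |C| < 1 ∧
      ((t = (f1 (x1 N)).1 - y1 N ∧ s = (f1 (x1 N)).2 - z1 N) ∨
        (t = (f2 (x2 M)).1 - y2 M ∧ s = (f2 (x2 M)).2 - z2 M)) ∧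
      (f1 (x1 N)).1 - y1 N = A * t + B * s ∧ (f1 (x1 N)).2 - z1 N = C * s := by
    by_cases hK : 1 ≤ K 0 1
    · have hR := (hj12 (K 0 1) hK le_rfl).2
      rw [hK1] at hR
      have hr := stmt13_rel (w 0 1 (K 0 1)) (a 0 1 (K 0 1)) (b 0 1 (K 0 1)) (c 0 1 (K 0 1))
        (d 0 1 (K 0 1)) (e 0 1 (K 0 1)) (f 0 1 (K 0 1)) (α 0 1 (K 0 1)) (β 0 1 (K 0 1))
        (γ 0 1 (K 0 1)) (hw 0 1 (K 0 1)) G2 G1 (hsub12 (K 0 1) hK le_rfl)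
        f2 f1 _ _ hgr2 hgr1 (x2 M) (y2 M) (z2 M) (x1 N) (y1 N) (z1 N)
        (hx2mem M le_rfl) hR
      exact ⟨_, _, _, _, _, hα 0 1 (K 0 1) hK le_rfl, hγ 0 1 (K 0 1) hK le_rfl,
        Or.inr ⟨rfl, rfl⟩, hr.1, hr.2⟩
    · have hKN : K 0 0 = N := by omega
      have h1N : 1 ≤ N := by omega
      have hNK : N ≤ K 0 0 := by omega
      have hR := (hj11 N h1N hNK).2
      have hr := stmt13_rel (w 0 0 N) (a 0 0 N) (b 0 0 N) (c 0 0 N) (d 0 0 N) (e 0 0 N)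
        (f 0 0 N) (α 0 0 N) (β 0 0 N) (γ 0 0 N) (hw 0 0 N) G1 G1 (hsub11 N h1N hNK)
        f1 f1 _ _ hgr1 hgr1 (x1 N) (y1 N) (z1 N) (x1 N) (y1 N) (z1 N)
        (hx1mem N le_rfl) hR
      exact ⟨_, _, _, _, _, hα 0 0 N h1N hNK, hγ 0 0 N h1N hNK,
        Or.inl ⟨rfl, rfl⟩, hr.1, hr.2⟩
  have h2R : ∃ A B C t s : ℝ, |A| < 1 ∧ |C| < 1 ∧
      ((t = (f1 (x1 N)).1 - y1 N ∧ s = (f1 (x1 N)).2 - z1 N) ∨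
        (t = (f2 (x2 M)).1 - y2 M ∧ s = (f2 (x2 M)).2 - z2 M)) ∧
      (f2 (x2 M)).1 - y2 M = A * t + B * s ∧ (f2 (x2 M)).2 - z2 M = C * s := by
    by_cases hK : 1 ≤ K 1 1
    · have hR := (hj22 (K 1 1) hK le_rfl).2
      rw [hK2] at hR
      have hr := stmt13_rel (w 1 1 (K 1 1)) (a 1 1 (K 1 1)) (b 1 1 (K 1 1)) (c 1 1 (K 1 1))
        (d 1 1 (K 1 1)) (e 1 1 (K 1 1)) (f 1 1 (K 1 1)) (α 1 1 (K 1 1)) (β 1 1 (K 1 1))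
        (γ 1 1 (K 1 1)) (hw 1 1 (K 1 1)) G2 G2 (hsub22 (K 1 1) hK le_rfl)
        f2 f2 _ _ hgr2 hgr2 (x2 M) (y2 M) (z2 M) (x2 M) (y2 M) (z2 M)
        (hx2mem M le_rfl) hR
      exact ⟨_, _, _, _, _, hα 1 1 (K 1 1) hK le_rfl, hγ 1 1 (K 1 1) hK le_rfl,
        Or.inr ⟨rfl, rfl⟩, hr.1, hr.2⟩
    · have h1M : 1 ≤ M := by omega
      have hMK : M ≤ K 1 0 := by omega
      have hR := (hj21 M h1M hMK).2
      have hr := stmt13_rel (w 1 0 M) (a 1 0 M) (b 1 0 M) (c 1 0 M) (d 1 0 M) (e 1 0 M)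
        (f 1 0 M) (α 1 0 M) (β 1 0 M) (γ 1 0 M) (hw 1 0 M) G1 G2 (hsub21 M h1M hMK)
        f1 f2 _ _ hgr1 hgr2 (x1 N) (y1 N) (z1 N) (x2 M) (y2 M) (z2 M)
        (hx1mem N le_rfl) hR
      exact ⟨_, _, _, _, _, hα 1 0 M h1M hMK, hγ 1 0 M h1M hMK,
        Or.inl ⟨rfl, rfl⟩, hr.1, hr.2⟩
  obtain ⟨A1, B1, C1, t1, s1, hA1, hC1, hd1, hy1L, hz1L⟩ := h1L
  obtain ⟨A2, B2, C2, t2, s2, hA2, hC2, hd2, hy2L, hz2L⟩ := h2L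
  obtain ⟨A3, B3, C3, t3, s3, hA3, hC3, hd3, hy1R, hz1R⟩ := h1R
  obtain ⟨A4, B4, C4, t4, s4, hA4, hC4, hd4, hy2R, hz2R⟩ := h2R
  -- solve for the z-errors at the left endpoints
  have hzL := stmt13_aux ((f1 (x1 0)).2 - z1 0) ((f2 (x2 0)).2 - z2 0)
    ⟨C1, s1, hC1, hd1.imp And.right And.right, hz1L⟩
    ⟨C2, s2, hC2, hd2.imp And.right And.right, hz2L⟩
  have hzR := stmt13_aux ((f1 (x1 N)).2 - z1 N) ((f2 (x2 M)).2 - z2 M)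
    ⟨C3, s3, hC3, hd3.imp And.right And.right, hz1R⟩
    ⟨C4, s4, hC4, hd4.imp And.right And.right, hz2R⟩
  -- the source z-errors vanish, so y-errors satisfy pure contractions
  have hs1 : s1 = 0 := by
    rcases hd1 with ⟨_, h⟩ | ⟨_, h⟩
    · rw [h]; exact hzL.1
    · rw [h]; exact hzL.2
  have hs2 : s2 = 0 := by
    rcases hd2 with ⟨_, h⟩ | ⟨_, h⟩
    · rw [h]; exact hzL.1
    · rw [h]; exact hzL.2
  have hs3 : s3 = 0 := by
    rcases hd3 with ⟨_, h⟩ | ⟨_, h⟩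
    · rw [h]; exact hzR.1
    · rw [h]; exact hzR.2
  have hs4 : s4 = 0 := by
    rcases hd4 with ⟨_, h⟩ | ⟨_, h⟩
    · rw [h]; exact hzR.1
    · rw [h]; exact hzR.2
  have hyL := stmt13_aux ((f1 (x1 0)).1 - y1 0) ((f2 (x2 0)).1 - y2 0)
    ⟨A1, t1, hA1, hd1.imp And.left And.left, by rw [hy1L, hs1]; ring⟩
    ⟨A2, t2, hA2, hd2.imp And.left And.left, by rw [hy2L, hs2]; ring⟩
  have hyR := stmt13_aux ((f1 (x1 N)).1 - y1 N) ((f2 (x2 M)).1 - y2 M)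
    ⟨A3, t3, hA3, hd3.imp And.left And.left, by rw [hy1R, hs3]; ring⟩
    ⟨A4, t4, hA4, hd4.imp And.left And.left, by rw [hy2R, hs4]; ring⟩
  -- endpoint values
  have e1L : f1 (x1 0) = (y1 0, z1 0) := by
    rw [Prod.ext_iff]; constructor
    · have := hyL.1; simp; linarith
    · have := hzL.1; simp; linarith
  have e1R : f1 (x1 N) = (y1 N, z1 N) := by
    rw [Prod.ext_iff]; constructor
    · have := hyR.1; simp; linarith
    · have := hzR.1; simp; linarith
  have e2L : f2 (x2 0) = (y2 0, z2 0) := by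
    rw [Prod.ext_iff]; constructor
    · have := hyL.2; simp; linarith
    · have := hzL.2; simp; linarith
  have e2R : f2 (x2 M) = (y2 M, z2 M) := by
    rw [Prod.ext_iff]; constructor
    · have := hyR.2; simp; linarith
    · have := hzR.2; simp; linarith
  have mem1L : (x1 0, y1 0, z1 0) ∈ G1 := by
    rw [hgr1]; exact ⟨x1 0, hx1mem 0 (Nat.zero_le _), show (x1 0, f1 (x1 0)) = _ by rw [e1L]⟩
  have mem1R : (x1 N, y1 N, z1 N) ∈ G1 := by
    rw [hgr1]; exact ⟨x1 N, hx1mem N le_rfl, show (x1 N, f1 (x1 N)) = _ by rw [e1R]⟩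
  have mem2R : (x2 M, y2 M, z2 M) ∈ G2 := by
    rw [hgr2]; exact ⟨x2 M, hx2mem M le_rfl, show (x2 M, f2 (x2 M)) = _ by rw [e2R]⟩
  -- all node points lie on the attractors
  have key1 : ∀ n, n ≤ N → (x1 n, y1 n, z1 n) ∈ G1 := by
    intro n hn
    rcases Nat.eq_zero_or_pos n with rfl | hpos
    · exact mem1L
    · by_cases hc : n ≤ K 0 0
      · exact hsub11 n hpos hc ⟨_, mem1R, (hj11 n hpos hc).2⟩
      · have hm1 : 1 ≤ n - K 0 0 := by omega
        have hm2 : n - K 0 0 ≤ K 0 1 := by omega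
        have hj := (hj12 (n - K 0 0) hm1 hm2).2
        have hKn : K 0 0 + (n - K 0 0) = n := by omega
        rw [hKn] at hj
        exact hsub12 _ hm1 hm2 ⟨_, mem2R, hj⟩
  have key2 : ∀ m, m ≤ M → (x2 m, y2 m, z2 m) ∈ G2 := by
    intro m hm
    rcases Nat.eq_zero_or_pos m with rfl | hpos
    · rw [hgr2]; exact ⟨x2 0, hx2mem 0 (Nat.zero_le _), show (x2 0, f2 (x2 0)) = _ by rw [e2L]⟩
    · by_cases hc : m ≤ K 1 0
      · exact hsub21 m hpos hc ⟨_, mem1R, (hj21 m hpos hc).2⟩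
      · have hm1 : 1 ≤ m - K 1 0 := by omega
        have hm2 : m - K 1 0 ≤ K 1 1 := by omega
        have hj := (hj22 (m - K 1 0) hm1 hm2).2
        have hKn : K 1 0 + (m - K 1 0) = m := by omega
        rw [hKn] at hj
        exact hsub22 _ hm1 hm2 ⟨_, mem2R, hj⟩
  refine ⟨?_, ?_, hf1c.fst, hf2c.fst, ?_, ?_⟩
  · rw [hgr1, Set.image_image]
  · rw [hgr2, Set.image_image]
  · intro n hn
    have := key1 n hn
    rw [hgr1] at this
    obtain ⟨x, _, hxe⟩ := this
    have hx : x = x1 n := congrArg Prod.fst hxe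
    have hfx : f1 x = (y1 n, z1 n) := congrArg Prod.snd hxe
    rw [← hx, hfx]
  · intro m hm
    have := key2 m hm
    rw [hgr2] at this
    obtain ⟨x, _, hxe⟩ := this
    have hx : x = x2 m := congrArg Prod.fst hxe
    have hfx : f2 x = (y2 m, z2 m) := congrArg Prod.snd hxe
    rw [← hx, hfx]
end

section
/- Let f^1 = (f_1^1, f_2^1) : [x_0^1, x_N^1] → ℝ² and f^2 = (f_1^2, f_2^2) : [x_0^2, x_M^2] → ℝ² be the continuous vector-valued functions whose graphs are the attractors G^1, G^2 of the generalized graph-directed IFS. Then the first components satisfy the graph-directed self-referential equations: for 1 ≤ n ≤ K^{11} and x ∈ [x_0^1, x_N^1], f_1^1(L_n^{11}(x)) = α_n^{11} f_1^1(x) + β_n^{11} f_2^1(x) + c_n^{11} x + d_n^{11}; for 1 ≤ n ≤ K^{12} and x ∈ [x_0^2, x_M^2], f_1^1(L_n^{12}(x)) = α_n^{12} f_1^2(x) + β_n^{12} f_2^2(x) + c_n^{12} x + d_n^{12}; for 1 ≤ n ≤ K^{21} and x ∈ [x_0^1, x_N^1], f_1^2(L_n^{21}(x)) = α_n^{21}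 f_1^1(x) + β_n^{21} f_2^1(x) + c_n^{21} x + d_n^{21}; and for 1 ≤ n ≤ K^{22} and x ∈ [x_0^2, x_M^2], f_1^2(L_n^{22}(x)) = α_n^{22} f_1^2(x) + β_n^{22} f_2^2(x) + c_n^{22} x + d_n^{22}. -/
open Set


private lemma aux14 (a b c d e f' α β γ : ℝ) (w : ℝ×ℝ×ℝ → ℝ×ℝ×ℝ)
    (hw : ∀ p : ℝ×ℝ×ℝ, w p = (a*p.1+b, c*p.1+α*p.2.1+β*p.2.2+d, e*p.1+γ*p.2.2+f'))
    (Gs Gr : Set (ℝ×ℝ×ℝ)) (hsub : w '' Gs ⊆ Gr)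
    (fs fr : ℝ → ℝ×ℝ) (Is Ir : Set ℝ)
    (hgs : Gs = (fun x => (x, fs x)) '' Is)
    (hgr : Gr = (fun x => (x, fr x)) '' Ir) :
    ∀ x ∈ Is, (fr (a*x+b)).1 = α*(fs x).1 + β*(fs x).2 + c*x + d := by
  intro x hx
  have hp : (x, fs x) ∈ Gs := by rw [hgs]; exact ⟨x, hx, rfl⟩
  have hmem : w (x, fs x) ∈ Gr := hsub ⟨_, hp, rfl⟩
  rw [hgr] at hmem
  obtain ⟨t, _, heq⟩ := hmem
  rw [hw] at heq
  have h1 : t = a*x+b := congrArg Prod.fst heq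
  have h2 : (fr t).1 = c*x+α*(fs x).1+β*(fs x).2+d := congrArg (fun p => p.2.1) heq
  rw [h1] at h2; rw [h2]; ring

theorem stmt_14
    (N M : ℕ) (hN : 2 ≤ N) (hM : 2 ≤ M)
    (x1 y1 z1 x2 y2 z2 : ℕ → ℝ)
    (hx1 : ∀ i, i < N → x1 i < x1 (i + 1))
    (hx2 : ∀ j, j < M → x2 j < x2 (j + 1))
    (hstar1 : ∀ i, 1 ≤ i → i ≤ N → x1 i - x1 (i - 1) < x2 M - x2 0)
    (hstar2 : ∀ j, 1 ≤ j → j ≤ M → x2 j - x2 (j - 1) < x1 N - x1 0)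
    (K : Fin 2 → Fin 2 → ℕ)
    (hK1 : K 0 0 + K 0 1 = N) (hK2 : K 1 0 + K 1 1 = M)
    (a b c d e f α β γ : Fin 2 → Fin 2 → ℕ → ℝ)
    (hα : ∀ r s n, 1 ≤ n → n ≤ K r s → |α r s n| < 1)
    (hγ : ∀ r s n, 1 ≤ n → n ≤ K r s → |γ r s n| < 1)
    (hβγ : ∀ r s n, 1 ≤ n → n ≤ K r s → |β r s n| + |γ r s n| < 1)
    (w : Fin 2 → Fin 2 → ℕ → ℝ × ℝ × ℝ → ℝ × ℝ × ℝ)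
    (hw : ∀ r s n p, w r s n p =
      (a r s n * p.1 + b r s n,
       c r s n * p.1 + α r s n * p.2.1 + β r s n * p.2.2 + d r s n,
       e r s n * p.1 + γ r s n * p.2.2 + f r s n))
    (hj11 : ∀ n, 1 ≤ n → n ≤ K 0 0 →
      w 0 0 n (x1 0, y1 0, z1 0) = (x1 (n - 1), y1 (n - 1), z1 (n - 1)) ∧
      w 0 0 n (x1 N, y1 N, z1 N) = (x1 n, y1 n, z1 n))
    (hj12 : ∀ n, 1 ≤ n → n ≤ K 0 1 →
      w 0 1 n (x2 0, y2 0, z2 0) =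
        (x1 (K 0 0 + n - 1), y1 (K 0 0 + n - 1), z1 (K 0 0 + n - 1)) ∧
      w 0 1 n (x2 M, y2 M, z2 M) = (x1 (K 0 0 + n), y1 (K 0 0 + n), z1 (K 0 0 + n)))
    (hj21 : ∀ n, 1 ≤ n → n ≤ K 1 0 →
      w 1 0 n (x1 0, y1 0, z1 0) = (x2 (n - 1), y2 (n - 1), z2 (n - 1)) ∧
      w 1 0 n (x1 N, y1 N, z1 N) = (x2 n, y2 n, z2 n))
    (hj22 : ∀ n, 1 ≤ n → n ≤ K 1 1 →
      w 1 1 n (x2 0, y2 0, z2 0) =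
        (x2 (K 1 0 + n - 1), y2 (K 1 0 + n - 1), z2 (K 1 0 + n - 1)) ∧
      w 1 1 n (x2 M, y2 M, z2 M) = (x2 (K 1 0 + n), y2 (K 1 0 + n), z2 (K 1 0 + n)))
    (G1 G2 : Set (ℝ × ℝ × ℝ))
    (hG1ne : G1.Nonempty) (hG1c : IsCompact G1) (hG2ne : G2.Nonempty) (hG2c : IsCompact G2)
    (hG1 : G1 = (⋃ n ∈ Set.Icc 1 (K 0 0), w 0 0 n '' G1) ∪ (⋃ n ∈ Set.Icc 1 (K 0 1), w 0 1 n '' G2))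
    (hG2 : G2 = (⋃ n ∈ Set.Icc 1 (K 1 0), w 1 0 n '' G1) ∪ (⋃ n ∈ Set.Icc 1 (K 1 1), w 1 1 n '' G2))
    (f1 f2 : ℝ → ℝ × ℝ)
    (hf1c : ContinuousOn f1 (Set.Icc (x1 0) (x1 N))) (hf2c : ContinuousOn f2 (Set.Icc (x2 0) (x2 M)))
    (hgr1 : G1 = (fun x => (x, f1 x)) '' Set.Icc (x1 0) (x1 N))
    (hgr2 : G2 = (fun x => (x, f2 x)) '' Set.Icc (x2 0) (x2 M)) :
    (∀ n, 1 ≤ n → n ≤ K 0 0 → ∀ x ∈ Set.Icc (x1 0) (x1 N),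
      (f1 (a 0 0 n * x + b 0 0 n)).1 =
        α 0 0 n * (f1 x).1 + β 0 0 n * (f1 x).2 + c 0 0 n * x + d 0 0 n) ∧
    (∀ n, 1 ≤ n → n ≤ K 0 1 → ∀ x ∈ Set.Icc (x2 0) (x2 M),
      (f1 (a 0 1 n * x + b 0 1 n)).1 =
        α 0 1 n * (f2 x).1 + β 0 1 n * (f2 x).2 + c 0 1 n * x + d 0 1 n) ∧
    (∀ n, 1 ≤ n → n ≤ K 1 0 → ∀ x ∈ Set.Icc (x1 0) (x1 N),
      (f2 (a 1 0 n * x + b 1 0 n)).1 =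
        α 1 0 n * (f1 x).1 + β 1 0 n * (f1 x).2 + c 1 0 n * x + d 1 0 n) ∧
    (∀ n, 1 ≤ n → n ≤ K 1 1 → ∀ x ∈ Set.Icc (x2 0) (x2 M),
      (f2 (a 1 1 n * x + b 1 1 n)).1 =
        α 1 1 n * (f2 x).1 + β 1 1 n * (f2 x).2 + c 1 1 n * x + d 1 1 n) := by
  refine ⟨?_, ?_, ?_, ?_⟩
  · intro n hn1 hn2 x hx
    have hsub : w 0 0 n '' G1 ⊆ G1 := by
      intro p hp
      rw [hG1]
      exact Or.inl (Set.mem_biUnion ⟨hn1, hn2⟩ hp)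
    exact aux14 _ _ _ _ _ _ _ _ _ _ (hw 0 0 n) G1 G1 hsub f1 f1 _ _ hgr1 hgr1 x hx
  · intro n hn1 hn2 x hx
    have hsub : w 0 1 n '' G2 ⊆ G1 := by
      intro p hp
      rw [hG1]
      exact Or.inr (Set.mem_biUnion ⟨hn1, hn2⟩ hp)
    exact aux14 _ _ _ _ _ _ _ _ _ _ (hw 0 1 n) G2 G1 hsub f2 f1 _ _ hgr2 hgr1 x hx
  · intro n hn1 hn2 x hx
    have hsub : w 1 0 n '' G1 ⊆ G2 := by
      intro p hp
      rw [hG2]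
      exact Or.inl (Set.mem_biUnion ⟨hn1, hn2⟩ hp)
    exact aux14 _ _ _ _ _ _ _ _ _ _ (hw 1 0 n) G1 G2 hsub f1 f2 _ _ hgr1 hgr2 x hx
  · intro n hn1 hn2 x hx
    have hsub : w 1 1 n '' G2 ⊆ G2 := by
      intro p hp
      rw [hG2]
      exact Or.inr (Set.mem_biUnion ⟨hn1, hn2⟩ hp)
    exact aux14 _ _ _ _ _ _ _ _ _ _ (hw 1 1 n) G2 G2 hsub f2 f2 _ _ hgr2 hgr2 x hx
end

section
/- The generalized IFS {I × ℝ²; w_i : i = 1, …, N} has an attractor G, i.e., a nonempty compact set G ⊂ ℝ³ with G = ⋃_{i=1}^N w_i(G), and G is the graph of a continuous vector-valued function f : I → ℝ² satisfying f(x_i) = (y_i, z_i) for all i = 0, 1, …, N; that is, G = {(x, f(x)) : x ∈ I}. -/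
/-!
The `z`-component of `w_i` does not involve `y`, so the system is triangular: `h` is the
fractal interpolant of the scalar system `z ↦ γ_i z + e_i x + f_i`, and then `g` is that of
`y ↦ α_i y + (β_i h(x) + c_i x + d_i)`. Each scalar interpolant is the fixed point of the
Read–Bajraktarević operator `(T g)(L_i t) = F_i(t, g t)` on the continuous functions on
`I = [x_0, x_N]` with prescribed endpoint values; the join-up conditions make `T g` continuous
across the nodes, and `|γ_i| < 1`, resp. `|α_i| < 1`, makes `T` a contraction in the sup
metric. The graph of `(g, h)` is then mapped by `w_i` onto its part over `I_i`, so it is the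
attractor.
-/

open Set

section Nodes

variable {N : ℕ} {x : ℕ → ℝ}

theorem exists_mem_Icc_pred_of_mem_Icc_s17 (hN : 1 ≤ N) {s : ℝ} (hs : s ∈ Icc (x 0) (x N)) :
    ∃ i ∈ Icc 1 N, s ∈ Icc (x (i - 1)) (x i) := by
  induction N, hN using Nat.le_induction with
  | base => exact ⟨1, ⟨le_rfl, le_rfl⟩, hs⟩
  | succ N hN ih =>
    by_cases h : s ≤ x N
    · obtain ⟨i, hi, hsi⟩ := ih ⟨hs.1, h⟩
      exact ⟨i, ⟨hi.1, hi.2.trans N.le_succ⟩, hsi⟩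
    · exact ⟨N + 1, ⟨by omega, le_rfl⟩, (not_le.mp h).le, hs.2⟩

theorem Icc_pred_subset_Icc (hx : MonotoneOn x (Iic N)) {i : ℕ} (hi : i ∈ Icc 1 N) :
    Icc (x (i - 1)) (x i) ⊆ Icc (x 0) (x N) := by
  obtain ⟨hi1, hi2⟩ := hi
  exact Icc_subset_Icc (hx (by simp) (by simp only [mem_Iic]; omega) (Nat.zero_le _))
    (hx (by simpa using hi2) (by simp) hi2)

theorem biUnion_Icc_pred_eq (hN : 1 ≤ N) (hx : MonotoneOn x (Iic N)) :
    ⋃ i ∈ Icc 1 N, Icc (x (i - 1)) (x i) = Icc (x 0) (x N) :=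
  Subset.antisymm (iUnion₂_subset fun _ hi => Icc_pred_subset_Icc hx hi) fun _ hs =>
    let ⟨_, hi, hsi⟩ := exists_mem_Icc_pred_of_mem_Icc_s17 hN hs
    mem_biUnion hi hsi

theorem StrictMonoOn.eq_add_one_of_mem_Icc_pred (hx : StrictMonoOn x (Iic N)) {i j : ℕ}
    (hij : i < j) (hj : j ≤ N) {s : ℝ} (hsi : s ∈ Icc (x (i - 1)) (x i))
    (hsj : s ∈ Icc (x (j - 1)) (x j)) :
    j = i + 1 ∧ s = x i := by
  have hji : j - 1 = i := by
    by_contra hne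
    have := hx (show i ∈ Iic N by simp only [mem_Iic]; omega)
      (show j - 1 ∈ Iic N by simp only [mem_Iic]; omega) (by omega)
    linarith [hsi.2, hsj.1]
  refine ⟨by omega, le_antisymm hsi.2 ?_⟩
  simpa [hji] using hsj.1

end Nodes

section AffinePieces

variable {N : ℕ} {x a b : ℕ → ℝ} {i : ℕ}

def AffineJoinUp (N : ℕ) (x a b : ℕ → ℝ) : Prop :=
  ∀ i ∈ Icc 1 N, a i * x 0 + b i = x (i - 1) ∧ a i * x N + b i = x i

theorem AffineJoinUp.pos (hx : StrictMonoOn x (Iic N)) (hL : AffineJoinUp N x a b)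
    (hi : i ∈ Icc 1 N) : 0 < a i := by
  obtain ⟨hi1, hi2⟩ := id hi
  have hpred : x (i - 1) < x i :=
    hx (by simp only [mem_Iic]; omega) (by simpa using hi2) (by omega)
  have h0N : x 0 ≤ x N := hx.monotoneOn (by simp) (by simp) (Nat.zero_le _)
  have hslope : a i * (x N - x 0) = x i - x (i - 1) := by
    linear_combination (hL i hi).2 - (hL i hi).1
  exact pos_of_mul_pos_left (by linarith) (sub_nonneg.2 h0N)

theorem AffineJoinUp.image_Icc (hx : StrictMonoOn x (Iic N)) (hL : AffineJoinUp N x a b)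
    (hi : i ∈ Icc 1 N) :
    (a i * · + b i) '' Icc (x 0) (x N) = Icc (x (i - 1)) (x i) := by
  rw [image_affine_Icc' (hL.pos hx hi), (hL i hi).1, (hL i hi).2]

theorem affine_sub_div_cancel {a : ℝ} (ha : a ≠ 0) (b t : ℝ) : (a * t + b - b) / a = t := by
  rw [add_sub_cancel_right, mul_div_cancel_left₀ _ ha]

theorem AffineJoinUp.sub_div_mem_Icc (hx : StrictMonoOn x (Iic N)) (hL : AffineJoinUp N x a b)
    (hi : i ∈ Icc 1 N) {s : ℝ} (hs : s ∈ Icc (x (i - 1)) (x i)) :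
    (s - b i) / a i ∈ Icc (x 0) (x N) := by
  rw [← hL.image_Icc hx hi] at hs
  obtain ⟨t, ht, rfl⟩ := hs
  rwa [affine_sub_div_cancel (hL.pos hx hi).ne']

end AffinePieces

section ReadBajraktarevic

variable {E : Type*} {N : ℕ} {x a b : ℕ → ℝ} {F : ℕ → ℝ → E → E} {v : ℕ → E} {g : ℝ → E}

def JoinUp (N : ℕ) (x : ℕ → ℝ) (v : ℕ → E) (F : ℕ → ℝ → E → E) : Prop :=
  ∀ i ∈ Icc 1 N, F i (x 0) (v 0) = v (i - 1) ∧ F i (x N) (v N) = v i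

noncomputable def pieceIndex (N : ℕ) (x : ℕ → ℝ) (s : ℝ) : ℕ :=
  Classical.epsilon fun i => i ∈ Icc 1 N ∧ s ∈ Icc (x (i - 1)) (x i)

theorem pieceIndex_spec (hN : 1 ≤ N) {s : ℝ} (hs : s ∈ Icc (x 0) (x N)) :
    pieceIndex N x s ∈ Icc 1 N ∧ s ∈ Icc (x (pieceIndex N x s - 1)) (x (pieceIndex N x s)) :=
  Classical.epsilon_spec (exists_mem_Icc_pred_of_mem_Icc_s17 hN hs)

noncomputable def rbPiece (a b : ℕ → ℝ) (F : ℕ → ℝ → E → E) (g : ℝ → E) (i : ℕ) (s : ℝ) : E :=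
  F i ((s - b i) / a i) (g ((s - b i) / a i))

/-- The piece containing `s` is chosen arbitrarily; for `g` with the right endpoint values the
join-up conditions make the choice irrelevant (`readBajraktarevic_eq_rbPiece`). -/
noncomputable def readBajraktarevic (N : ℕ) (x a b : ℕ → ℝ) (F : ℕ → ℝ → E → E) (g : ℝ → E)
    (s : ℝ) : E :=
  rbPiece a b F g (pieceIndex N x s) s

theorem rbPiece_eq_of_mem_inter (hx : StrictMonoOn x (Iic N)) (hL : AffineJoinUp N x a b)
    (hjoin : JoinUp N x v F) (hg0 : g (x 0) = v 0) (hgN : g (x N) = v N) {i j : ℕ}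
    (hi : i ∈ Icc 1 N) (hj : j ∈ Icc 1 N) {s : ℝ} (hsi : s ∈ Icc (x (i - 1)) (x i))
    (hsj : s ∈ Icc (x (j - 1)) (x j)) :
    rbPiece a b F g i s = rbPiece a b F g j s := by
  wlog hij : i < j generalizing i j
  · rcases (not_lt.1 hij).eq_or_lt with rfl | hji
    · rfl
    · exact (this hj hi hsj hsi hji).symm
  obtain ⟨rfl, rfl⟩ := hx.eq_add_one_of_mem_Icc_pred hij hj.2 hsi hsj
  have hright : (x i - b i) / a i = x N := by
    rw [← (hL i hi).2, affine_sub_div_cancel (hL.pos hx hi).ne']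
  have hleft : (x i - b (i + 1)) / a (i + 1) = x 0 := by
    have hL0 := (hL (i + 1) hj).1
    rw [Nat.add_sub_cancel] at hL0
    rw [← hL0, affine_sub_div_cancel (hL.pos hx hj).ne']
  have hjoin0 := (hjoin (i + 1) hj).1
  rw [Nat.add_sub_cancel] at hjoin0
  simp only [rbPiece, hright, hleft, hgN, hg0, (hjoin i hi).2, hjoin0]

theorem readBajraktarevic_eq_rbPiece (hN : 1 ≤ N) (hx : StrictMonoOn x (Iic N))
    (hL : AffineJoinUp N x a b) (hjoin : JoinUp N x v F) (hg0 : g (x 0) = v 0)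
    (hgN : g (x N) = v N) {i : ℕ} (hi : i ∈ Icc 1 N) {s : ℝ} (hs : s ∈ Icc (x (i - 1)) (x i)) :
    readBajraktarevic N x a b F g s = rbPiece a b F g i s := by
  obtain ⟨hk, hsk⟩ := pieceIndex_spec hN (Icc_pred_subset_Icc hx.monotoneOn hi hs)
  exact rbPiece_eq_of_mem_inter hx hL hjoin hg0 hgN hk hi hsk hs

theorem readBajraktarevic_node (hN : 1 ≤ N) (hx : StrictMonoOn x (Iic N))
    (hL : AffineJoinUp N x a b) (hjoin : JoinUp N x v F) (hg0 : g (x 0) = v 0)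
    (hgN : g (x N) = v N) {i : ℕ} (hi : i ≤ N) :
    readBajraktarevic N x a b F g (x i) = v i := by
  have hmono := hx.monotoneOn
  rcases Nat.eq_zero_or_pos i with rfl | hi0
  · have h1 : (1 : ℕ) ∈ Icc 1 N := ⟨le_rfl, hN⟩
    rw [readBajraktarevic_eq_rbPiece hN hx hL hjoin hg0 hgN h1
      ⟨le_rfl, hmono (by simp) (by simpa using hN) zero_le_one⟩, rbPiece, ← (hL 1 h1).1,
      affine_sub_div_cancel (hL.pos hx h1).ne', hg0, (hjoin 1 h1).1]
  · have hi' : i ∈ Icc 1 N := ⟨hi0, hi⟩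
    rw [readBajraktarevic_eq_rbPiece hN hx hL hjoin hg0 hgN hi'
      ⟨hmono (by simp only [mem_Iic]; omega) (by simpa using hi) (Nat.sub_le i 1), le_rfl⟩,
      rbPiece, ← (hL i hi').2, affine_sub_div_cancel (hL.pos hx hi').ne', hgN, (hjoin i hi').2]

theorem continuous_rbPiece [TopologicalSpace E]
    (hF : ∀ i ∈ Icc 1 N, Continuous fun p : ℝ × E => F i p.1 p.2) (hg : Continuous g) {i : ℕ}
    (hi : i ∈ Icc 1 N) : Continuous (rbPiece a b F g i) :=
  (hF i hi).comp (by fun_prop : Continuous fun s => ((s - b i) / a i, g ((s - b i) / a i)))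

theorem continuousOn_readBajraktarevic [TopologicalSpace E] (hN : 1 ≤ N)
    (hx : StrictMonoOn x (Iic N)) (hL : AffineJoinUp N x a b) (hjoin : JoinUp N x v F)
    (hF : ∀ i ∈ Icc 1 N, Continuous fun p : ℝ × E => F i p.1 p.2) (hg : Continuous g)
    (hg0 : g (x 0) = v 0) (hgN : g (x N) = v N) :
    ContinuousOn (readBajraktarevic N x a b F g) (Icc (x 0) (x N)) := by
  rw [← biUnion_Icc_pred_eq hN hx.monotoneOn, biUnion_eq_iUnion]
  refine (locallyFinite_of_finite _).continuousOn_iUnion (fun _ => isClosed_Icc)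
    fun ⟨i, hi⟩ => ?_
  exact (continuous_rbPiece hF hg hi).continuousOn.congr fun s hs =>
    readBajraktarevic_eq_rbPiece hN hx hL hjoin hg0 hgN hi hs

theorem dist_readBajraktarevic_le [PseudoMetricSpace E] (hN : 1 ≤ N)
    (hx : StrictMonoOn x (Iic N)) (hL : AffineJoinUp N x a b) {K : NNReal}
    (hFK : ∀ i ∈ Icc 1 N, ∀ t, LipschitzWith K (F i t))
    {g₁ g₂ : ℝ → E} {δ : ℝ} (hδ : ∀ t ∈ Icc (x 0) (x N), dist (g₁ t) (g₂ t) ≤ δ) {s : ℝ}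
    (hs : s ∈ Icc (x 0) (x N)) :
    dist (readBajraktarevic N x a b F g₁ s) (readBajraktarevic N x a b F g₂ s) ≤ K * δ := by
  obtain ⟨hk, hsk⟩ := pieceIndex_spec hN hs
  exact ((hFK _ hk _).dist_le_mul _ _).trans
    (mul_le_mul_of_nonneg_left (hδ _ (hL.sub_div_mem_Icc hx hk hsk)) K.2)

end ReadBajraktarevic

theorem Joined.exists_continuous_eq_eq {E : Type*} [TopologicalSpace E] {u w : E}
    (h : Joined u w) {p q : ℝ} (hpq : p < q) : ∃ g : ℝ → E, Continuous g ∧ g p = u ∧ g q = w := by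
  refine ⟨fun t => h.somePath.extend ((t - p) / (q - p)), by fun_prop, by simp, ?_⟩
  simp [div_self (sub_ne_zero.2 hpq.ne')]

section FixedPoint

variable {E : Type*} [MetricSpace E] [CompleteSpace E] {N : ℕ} {x a b : ℕ → ℝ}
  {F : ℕ → ℝ → E → E} {v : ℕ → E}

theorem exists_continuous_fixedPoint_readBajraktarevic (hN : 1 ≤ N)
    (hx : StrictMonoOn x (Iic N)) (hL : AffineJoinUp N x a b) (hjoin : JoinUp N x v F)
    (hv : Joined (v 0) (v N)) (hF : ∀ i ∈ Icc 1 N, Continuous fun p : ℝ × E => F i p.1 p.2)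
    {K : NNReal} (hK : K < 1) (hFK : ∀ i ∈ Icc 1 N, ∀ t, LipschitzWith K (F i t)) :
    ∃ g : ℝ → E, Continuous g ∧ g (x 0) = v 0 ∧ g (x N) = v N ∧
      EqOn (readBajraktarevic N x a b F g) g (Icc (x 0) (x N)) := by
  have h0N : x 0 < x N := hx (by simp) (by simp) (by omega)
  set I := Icc (x 0) (x N)
  let X : Set C(I, E) := {g | IccExtend h0N.le g (x 0) = v 0 ∧ IccExtend h0N.le g (x N) = v N}
  have hXc : IsClosed X := by
    simp only [X, IccExtend_left, IccExtend_right, ofPred_and]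
    exact (isClosed_eq (continuous_eval_const _) continuous_const).inter
      (isClosed_eq (continuous_eval_const _) continuous_const)
  have : CompleteSpace X := hXc.completeSpace_coe
  have : Nonempty X := by
    obtain ⟨g, hg, hg0, hgN⟩ := hv.exists_continuous_eq_eq h0N
    exact ⟨⟨⟨fun s => g s, hg.continuousOn.domRestrict⟩,
      (IccExtend_left _ _).trans hg0, (IccExtend_right _ _).trans hgN⟩⟩
  let T : X → X := fun g =>
    ⟨⟨fun s => readBajraktarevic N x a b F (IccExtend h0N.le g) s,
      (continuousOn_readBajraktarevic hN hx hL hjoin hF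
        (continuous_IccExtend_iff.2 g.1.continuous) g.2.1 g.2.2).domRestrict⟩,
      (IccExtend_left _ _).trans
        (readBajraktarevic_node hN hx hL hjoin g.2.1 g.2.2 (Nat.zero_le N)),
      (IccExtend_right _ _).trans
        (readBajraktarevic_node hN hx hL hjoin g.2.1 g.2.2 le_rfl)⟩
  have hT : ContractingWith K T := by
    refine ⟨hK, LipschitzWith.of_dist_le_mul fun g₁ g₂ => ?_⟩
    refine (ContinuousMap.dist_le (by positivity)).2 fun s => ?_
    refine dist_readBajraktarevic_le hN hx hL hFK (fun t ht => ?_) s.2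
    rw [IccExtend_of_mem _ _ ht, IccExtend_of_mem _ _ ht]
    exact ContinuousMap.dist_apply_le_dist _
  set g := ContractingWith.fixedPoint T hT
  have hfix : T g = g := hT.fixedPoint_isFixedPt
  refine ⟨IccExtend h0N.le g, continuous_IccExtend_iff.2 g.1.continuous, g.2.1, g.2.2,
    fun s hs => ?_⟩
  rw [IccExtend_of_mem _ _ hs]
  exact congrArg (fun h : X => (h : C(I, E)) ⟨s, hs⟩) hfix

theorem exists_fractalInterpolation (hN : 1 ≤ N)
    (hx : StrictMonoOn x (Iic N)) (hL : AffineJoinUp N x a b) (hjoin : JoinUp N x v F)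
    (hv : Joined (v 0) (v N)) (hF : ∀ i ∈ Icc 1 N, Continuous fun p : ℝ × E => F i p.1 p.2)
    {K : NNReal} (hK : K < 1) (hFK : ∀ i ∈ Icc 1 N, ∀ t, LipschitzWith K (F i t)) :
    ∃ g : ℝ → E, Continuous g ∧ (∀ i ≤ N, g (x i) = v i) ∧
      ∀ i ∈ Icc 1 N, ∀ t ∈ Icc (x 0) (x N), g (a i * t + b i) = F i t (g t) := by
  obtain ⟨g, hg, hg0, hgN, hfix⟩ :=
    exists_continuous_fixedPoint_readBajraktarevic hN hx hL hjoin hv hF hK hFK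
  refine ⟨g, hg, fun i hi => ?_, fun i hi t ht => ?_⟩
  · have hxi : x i ∈ Icc (x 0) (x N) :=
      ⟨hx.monotoneOn (by simp) (by simpa using hi) (Nat.zero_le i),
        hx.monotoneOn (by simpa using hi) (by simp) hi⟩
    rw [← hfix hxi, readBajraktarevic_node hN hx hL hjoin hg0 hgN hi]
  · have hLt : a i * t + b i ∈ Icc (x (i - 1)) (x i) :=
      hL.image_Icc hx hi ▸ mem_image_of_mem _ ht
    rw [← hfix (Icc_pred_subset_Icc hx.monotoneOn hi hLt),
      readBajraktarevic_eq_rbPiece hN hx hL hjoin hg0 hgN hi hLt, rbPiece,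
      affine_sub_div_cancel (hL.pos hx hi).ne']

end FixedPoint

theorem AffineJoinUp.biUnion_image_Icc {N : ℕ} {x a b : ℕ → ℝ} (hN : 1 ≤ N)
    (hx : StrictMonoOn x (Iic N)) (hL : AffineJoinUp N x a b) :
    ⋃ i ∈ Icc 1 N, (a i * · + b i) '' Icc (x 0) (x N) = Icc (x 0) (x N) :=
  (iUnion₂_congr fun i hi => hL.image_Icc (i := i) hx hi).trans
    (biUnion_Icc_pred_eq hN hx.monotoneOn)

theorem biUnion_image_graph {ι α β : Type*} {S : Set ι} {I : Set α} {w : ι → α × β → α × β}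
    {L : ι → α → α} {φ : α → β} (hw : ∀ i ∈ S, ∀ t ∈ I, w i (t, φ t) = (L i t, φ (L i t)))
    (hL : ⋃ i ∈ S, L i '' I = I) :
    ⋃ i ∈ S, w i '' ((fun t => (t, φ t)) '' I) = (fun t => (t, φ t)) '' I := by
  calc ⋃ i ∈ S, w i '' ((fun t => (t, φ t)) '' I)
      = ⋃ i ∈ S, (fun t => (t, φ t)) '' (L i '' I) := by
        refine iUnion₂_congr fun i hi => ?_
        rw [image_image, image_image]
        exact image_congr (hw i hi)
    _ = (fun t => (t, φ t)) '' I := by rw [← image_iUnion₂, hL]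

theorem Set.Finite.exists_lt_one_forall_abs_le {ι : Type*} {s : Set ι} (hs : s.Finite)
    {r : ι → ℝ} (hr : ∀ i ∈ s, |r i| < 1) : ∃ K : NNReal, K < 1 ∧ ∀ i ∈ s, |r i| ≤ K := by
  refine ⟨hs.toFinset.sup fun i => ‖r i‖₊, (Finset.sup_lt_iff zero_lt_one).2 fun i hi => ?_,
    fun i hi => ?_⟩
  · rw [← NNReal.coe_lt_coe, coe_nnnorm, Real.norm_eq_abs]
    exact hr i (hs.mem_toFinset.1 hi)
  · rw [← Real.norm_eq_abs, ← coe_nnnorm, NNReal.coe_le_coe]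
    exact Finset.le_sup (f := fun i => ‖r i‖₊) (hs.mem_toFinset.2 hi)

theorem lipschitzWith_mul_add {r : ℝ} {K : NNReal} (hr : |r| ≤ K) (c : ℝ) :
    LipschitzWith K fun v : ℝ => r * v + c :=
  LipschitzWith.of_dist_le_mul fun v w => by
    rw [Real.dist_eq, Real.dist_eq, add_sub_add_right_eq_sub, ← mul_sub, abs_mul]
    exact mul_le_mul_of_nonneg_right hr (abs_nonneg _)

theorem stmt_17_general
    (N : ℕ) (hN : 1 ≤ N) (x y z : ℕ → ℝ)
    (hx : ∀ i, i < N → x i < x (i + 1))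
    (a b c d e f α β γ : ℕ → ℝ)
    (hL : ∀ i, 1 ≤ i → i ≤ N → a i * x 0 + b i = x (i - 1) ∧ a i * x N + b i = x i)
    (hα : ∀ i, 1 ≤ i → i ≤ N → |α i| < 1)
    (hγ : ∀ i, 1 ≤ i → i ≤ N → |γ i| < 1)
    (w : ℕ → ℝ × ℝ × ℝ → ℝ × ℝ × ℝ)
    (hw : ∀ i p, w i p =
      (a i * p.1 + b i,
       α i * p.2.1 + β i * p.2.2 + c i * p.1 + d i,
       γ i * p.2.2 + e i * p.1 + f i))
    (hjoin : ∀ i, 1 ≤ i → i ≤ N →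
      w i (x 0, y 0, z 0) = (x (i - 1), y (i - 1), z (i - 1)) ∧
      w i (x N, y N, z N) = (x i, y i, z i)) :
    ∃ G : Set (ℝ × ℝ × ℝ),
      G.Nonempty ∧ IsCompact G ∧
      G = (⋃ i ∈ Set.Icc 1 N, w i '' G) ∧
      ∃ fg : ℝ → ℝ × ℝ,
        ContinuousOn fg (Set.Icc (x 0) (x N)) ∧
        (∀ i, i ≤ N → fg (x i) = (y i, z i)) ∧
        G = (fun t => (t, fg t)) '' Set.Icc (x 0) (x N) := by
  have hxm : StrictMonoOn x (Iic N) := strictMonoOn_Iic_of_lt_succ fun i hi => hx i hi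
  have hL' : AffineJoinUp N x a b := fun i hi => hL i hi.1 hi.2
  have hjoin' := fun i (hi : i ∈ Icc 1 N) => by
    simpa only [hw, Prod.mk.injEq] using hjoin i hi.1 hi.2
  obtain ⟨Kγ, hKγ, hγK⟩ := (finite_Icc 1 N).exists_lt_one_forall_abs_le fun i hi => hγ i hi.1 hi.2
  obtain ⟨Kα, hKα, hαK⟩ := (finite_Icc 1 N).exists_lt_one_forall_abs_le fun i hi => hα i hi.1 hi.2
  have hzjoin : JoinUp N x z fun i t v => γ i * v + (e i * t + f i) := fun i hi => by
    obtain ⟨⟨-, -, hz0⟩, -, -, hzN⟩ := hjoin' i hi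
    exact ⟨by linear_combination hz0, by linear_combination hzN⟩
  obtain ⟨h, hh, hhx, hhL⟩ := exists_fractalInterpolation hN hxm hL' hzjoin
    (PathConnectedSpace.joined _ _) (fun i _ => by fun_prop) hKγ
    fun i hi t => lipschitzWith_mul_add (hγK i hi) _
  have hyjoin : JoinUp N x y fun i t v => α i * v + (β i * h t + c i * t + d i) :=
    fun i hi => by
      obtain ⟨⟨-, hy0, -⟩, -, hyN, -⟩ := hjoin' i hi
      exact ⟨by linear_combination hy0 + β i * hhx 0 (Nat.zero_le N),
        by linear_combination hyN + β i * hhx N le_rfl⟩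
  obtain ⟨g, hg, hgx, hgL⟩ := exists_fractalInterpolation hN hxm hL' hyjoin
    (PathConnectedSpace.joined _ _) (fun i _ => by fun_prop) hKα
    fun i hi t => lipschitzWith_mul_add (hαK i hi) _
  have hwgraph : ∀ i ∈ Icc 1 N, ∀ t ∈ Icc (x 0) (x N),
      w i (t, g t, h t) = (a i * t + b i, g (a i * t + b i), h (a i * t + b i)) := by
    intro i hi t ht
    rw [hw, hgL i hi t ht, hhL i hi t ht]
    ext <;> simp only <;> ring
  refine ⟨_, (nonempty_Icc.2 (hxm.monotoneOn (by simp) (by simp) (Nat.zero_le N))).image _,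
    isCompact_Icc.image (by fun_prop),
    (biUnion_image_graph hwgraph (hL'.biUnion_image_Icc hN hxm)).symm,
    fun t => (g t, h t), (hg.prodMk hh).continuousOn,
    fun i hi => Prod.ext (hgx i hi) (hhx i hi), rfl⟩

theorem stmt_17
    (N : ℕ) (hN : 1 ≤ N) (x y z : ℕ → ℝ)
    (hx : ∀ i, i < N → x i < x (i + 1))
    (a b c d e f α β γ : ℕ → ℝ)
    (ha : ∀ i, 1 ≤ i → i ≤ N → a i = (x i - x (i - 1)) / (x N - x 0))
    (hL : ∀ i, 1 ≤ i → i ≤ N → a i * x 0 + b i = x (i - 1) ∧ a i * x N + b i = x i)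
    (hα : ∀ i, 1 ≤ i → i ≤ N → |α i| < 1)
    (hγ : ∀ i, 1 ≤ i → i ≤ N → |γ i| < 1)
    (hβγ : ∀ i, 1 ≤ i → i ≤ N → |β i| + |γ i| < 1)
    (w : ℕ → ℝ × ℝ × ℝ → ℝ × ℝ × ℝ)
    (hw : ∀ i p, w i p =
      (a i * p.1 + b i,
       α i * p.2.1 + β i * p.2.2 + c i * p.1 + d i,
       γ i * p.2.2 + e i * p.1 + f i))
    (hjoin : ∀ i, 1 ≤ i → i ≤ N →
      w i (x 0, y 0, z 0) = (x (i - 1), y (i - 1), z (i - 1)) ∧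
      w i (x N, y N, z N) = (x i, y i, z i)) :
    ∃ G : Set (ℝ × ℝ × ℝ),
      G.Nonempty ∧ IsCompact G ∧
      G = (⋃ i ∈ Set.Icc 1 N, w i '' G) ∧
      ∃ fg : ℝ → ℝ × ℝ,
        ContinuousOn fg (Set.Icc (x 0) (x N)) ∧
        (∀ i, i ≤ N → fg (x i) = (y i, z i)) ∧
        G = (fun t => (t, fg t)) '' Set.Icc (x 0) (x N) :=
  stmt_17_general N hN x y z hx a b c d e f α β γ hL hα hγ w hw hjoin
end

section
/- Let G ⊂ ℝ³ be the attractor of the generalized IFS {I × ℝ²; w_i} and let f = (f_1, f_2) : I → ℝ² be the continuous vector-valued function whose graph is G. Then the projection of G onto ℝ² given by (x, y, z) ↦ (x, y) is the graph of the continuous function f_1 : I → ℝ (the coalescence hidden-variable fractal interpolation function), which satisfies f_1(x_i) = y_i for all i = 0, 1, …, N and the self-referential equation f_1(L_i(x)) = α_i f_1(x) + β_i f_2(x) + c_i x + d_i for all x ∈ I and i = 1, …, N. -/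
open Set

theorem stmt_18
    (N : ℕ) (hN : 1 ≤ N) (x y z : ℕ → ℝ)
    (hx : ∀ i, i < N → x i < x (i + 1))
    (a b c d e f α β γ : ℕ → ℝ)
    (ha : ∀ i, 1 ≤ i → i ≤ N → a i = (x i - x (i - 1)) / (x N - x 0))
    (hL : ∀ i, 1 ≤ i → i ≤ N → a i * x 0 + b i = x (i - 1) ∧ a i * x N + b i = x i)
    (hα : ∀ i, 1 ≤ i → i ≤ N → |α i| < 1)
    (hγ : ∀ i, 1 ≤ i → i ≤ N → |γ i| < 1)
    (hβγ : ∀ i, 1 ≤ i → i ≤ N → |β i| + |γ i| < 1)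
    (w : ℕ → ℝ × ℝ × ℝ → ℝ × ℝ × ℝ)
    (hw : ∀ i p, w i p =
      (a i * p.1 + b i,
       α i * p.2.1 + β i * p.2.2 + c i * p.1 + d i,
       γ i * p.2.2 + e i * p.1 + f i))
    (hjoin : ∀ i, 1 ≤ i → i ≤ N →
      w i (x 0, y 0, z 0) = (x (i - 1), y (i - 1), z (i - 1)) ∧
      w i (x N, y N, z N) = (x i, y i, z i))
    (G : Set (ℝ × ℝ × ℝ)) (hGne : G.Nonempty) (hGc : IsCompact G)
    (hG : G = ⋃ i ∈ Set.Icc 1 N, w i '' G)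
    (fg : ℝ → ℝ × ℝ)
    (hfgc : ContinuousOn fg (Set.Icc (x 0) (x N)))
    (hfgi : ∀ i, i ≤ N → fg (x i) = (y i, z i))
    (hfgG : G = (fun t => (t, fg t)) '' Set.Icc (x 0) (x N)) :
    ((fun p : ℝ × ℝ × ℝ => (p.1, p.2.1)) '' G =
      (fun t => (t, (fg t).1)) '' Set.Icc (x 0) (x N)) ∧
    ContinuousOn (fun t => (fg t).1) (Set.Icc (x 0) (x N)) ∧
    (∀ i, i ≤ N → (fg (x i)).1 = y i) ∧
    (∀ i, 1 ≤ i → i ≤ N → ∀ t ∈ Set.Icc (x 0) (x N),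
      (fg (a i * t + b i)).1 = α i * (fg t).1 + β i * (fg t).2 + c i * t + d i) := by
  have key : ∀ p ∈ G, p.2 = fg p.1 := by
    intro p hp
    rw [hfgG] at hp
    obtain ⟨t, _, ht⟩ := hp
    simp only [← ht]
  refine ⟨?_, ?_, ?_, ?_⟩
  · rw [hfgG, ← Set.image_comp]
    rfl
  · exact (continuous_fst.comp_continuousOn hfgc)
  · intro i hi; rw [hfgi i hi]
  · intro i hi1 hiN t ht
    have hmem : (t, fg t) ∈ G := by
      rw [hfgG]; exact ⟨t, ht, rfl⟩
    have hwmem : w i (t, fg t) ∈ G := by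
      rw [hG]
      exact Set.mem_biUnion (Set.mem_Icc.mpr ⟨hi1, hiN⟩) ⟨(t, fg t), hmem, rfl⟩
    have h2 := key _ hwmem
    rw [hw] at h2
    simp only at h2
    rw [← h2]
end
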